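/- arXiv:1002.4390 — 10 statements merged into one kernel-verified Lean document; each statement's English description precedes it below -/
import Mathlib

section
/- Let u_{ij} (1 ≤ i ≤ n, 1 ≤ j ≤ k) be elements of a C*-algebra satisfying the quantum increasing sequence relations. Then u_{ij} u_{i'j'} = 0 whenever 1 ≤ j ≤ j' ≤ k and i' - i < j' - j. -/
lemma qis_orth {A : Type*} [NormedRing A] [StarRing A] [CStarRing A]
    [CompleteSpace A] [NormedAlgebra ℂ A] [StarModule ℂ A]
    (s : Finset ℕ) (p : ℕ → A)
    (hp : ∀ l ∈ s, star (p l) = p l ∧ p l * p l = p l)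
    (hsum : ∑ l ∈ s, p l = 1)
    {i i' : ℕ} (hi : i ∈ s) (hi' : i' ∈ s) (hne : i ≠ i') : p i * p i' = 0 := by
  letI : CStarAlgebra A := {}
  letI := CStarAlgebra.spectralOrder A
  haveI := CStarAlgebra.spectralOrderedRing A
  -- enough to prove p i' * p i = 0 for any distinct pair, then apply symmetrically
  suffices H : ∀ a b : ℕ, a ∈ s → b ∈ s → a ≠ b → p b * p a = 0 by
    exact H i' i hi' hi hne.symm
  intro a b ha hb hab
  have hnn : ∀ l ∈ s, 0 ≤ p l := by
    intro l hl
    calc (0 : A) ≤ star (p l) * p l := star_mul_self_nonneg _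
    _ = p l * p l := by rw [(hp l hl).1]
    _ = p l := (hp l hl).2
  have hkey : p b ≤ 1 - p a := by
    have h1 : ∑ l ∈ s.erase a, p l = 1 - p a := by
      rw [eq_sub_iff_add_eq, Finset.sum_erase_add _ _ ha, hsum]
    rw [← h1]
    exact Finset.single_le_sum (fun l hl => hnn l (Finset.mem_of_mem_erase hl))
      (Finset.mem_erase.mpr ⟨hab.symm, hb⟩)
  have hconj := star_left_conjugate_le_conjugate hkey (p a)
  have hzero : star (p a) * (1 - p a) * p a = 0 := by
    rw [(hp a ha).1, mul_sub, mul_one, sub_mul, (hp a ha).2]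
    rw [(hp a ha).2, sub_self]
  have h2 : star (p b * p a) * (p b * p a) ≤ 0 := by
    calc star (p b * p a) * (p b * p a) = star (p a) * (star (p b) * p b) * p a := by
          rw [star_mul]; simp [mul_assoc]
    _ = star (p a) * p b * p a := by rw [(hp b hb).1, (hp b hb).2]
    _ ≤ star (p a) * (1 - p a) * p a := hconj
    _ = 0 := hzero
  have h3 : star (p b * p a) * (p b * p a) = 0 :=
    le_antisymm h2 (star_mul_self_nonneg _)
  exact CStarRing.star_mul_self_eq_zero_iff _ |>.mp h3

/-- If `u i j` (1 ≤ i ≤ n, 1 ≤ j ≤ k) satisfy the quantum increasing sequence relations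
in a unital C*-algebra, then `u i j * u i' j' = 0` whenever `j ≤ j'` and `i' - i < j' - j`. -/
theorem stmt_1 {A : Type*} [NormedRing A] [StarRing A] [CStarRing A]
    [CompleteSpace A] [NormedAlgebra ℂ A] [StarModule ℂ A]
    (n k : ℕ) (hkn : k ≤ n) (u : ℕ → ℕ → A)
    (hproj : ∀ i j, 1 ≤ i → i ≤ n → 1 ≤ j → j ≤ k →
      star (u i j) = u i j ∧ u i j * u i j = u i j)
    (hcol : ∀ j, 1 ≤ j → j ≤ k → ∑ i ∈ Finset.Icc 1 n, u i j = 1)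
    (hinc : ∀ i i' j j', 1 ≤ i → i ≤ n → 1 ≤ i' → i' ≤ n → 1 ≤ j → j ≤ k →
      1 ≤ j' → j' ≤ k → j < j' → i' ≤ i → u i j * u i' j' = 0) :
    ∀ i i' j j', 1 ≤ i → i ≤ n → 1 ≤ i' → i' ≤ n → 1 ≤ j → j ≤ k →
      1 ≤ j' → j' ≤ k → j ≤ j' → (i' : ℤ) - (i : ℤ) < (j' : ℤ) - (j : ℤ) →
      u i j * u i' j' = 0 := by
  have main : ∀ d : ℕ, ∀ i i' j j', 1 ≤ i → i ≤ n → 1 ≤ i' → i' ≤ n → 1 ≤ j → j ≤ k →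
      1 ≤ j' → j' ≤ k → j' = j + d → (i' : ℤ) - (i : ℤ) < (d : ℤ) →
      u i j * u i' j' = 0 := by
    intro d
    induction d with
    | zero =>
      intro i i' j j' hi1 hin hi'1 hi'n hj1 hjk hj'1 hj'k hjd hlt
      obtain rfl : j' = j := by omega
      have hii' : i' ≠ i := by omega
      exact qis_orth (Finset.Icc 1 n) (fun l => u l j')
        (fun l hl => by
          rw [Finset.mem_Icc] at hl
          exact hproj l j' hl.1 hl.2 hj'1 hj'k)
        (hcol j' hj'1 hj'k)
        (Finset.mem_Icc.mpr ⟨hi1, hin⟩) (Finset.mem_Icc.mpr ⟨hi'1, hi'n⟩)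
        (by omega)
    | succ d ih =>
      intro i i' j j' hi1 hin hi'1 hi'n hj1 hjk hj'1 hj'k hjd hlt
      have hj1k : j + 1 ≤ k := by omega
      have : u i j * u i' j' = ∑ l ∈ Finset.Icc 1 n, u i j * (u l (j+1) * u i' j') := by
        rw [← Finset.mul_sum, ← Finset.sum_mul, hcol (j+1) (by omega) hj1k, one_mul]
      rw [this]
      apply Finset.sum_eq_zero
      intro l hl
      rw [Finset.mem_Icc] at hl
      by_cases hli : l ≤ i
      · rw [← mul_assoc, hinc i l j (j+1) hi1 hin hl.1 hl.2 hj1 hjk (by omega) hj1k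
          (by omega) hli, zero_mul]
      · rw [ih l i' (j+1) j' hl.1 hl.2 hi'1 hi'n (by omega) hj1k hj'1 hj'k (by omega)
          (by push_cast; omega), mul_zero]
  intro i i' j j' hi1 hin hi'1 hi'n hj1 hjk hj'1 hj'k hjj' hlt
  exact main (j' - j) i i' j j' hi1 hin hi'1 hi'n hj1 hjk hj'1 hj'k (by omega)
    (by push_cast; omega)
end

section
/- Let u_{ij} (1 ≤ i ≤ n, 1 ≤ j ≤ k) satisfy the quantum increasing sequence relations in a C*-algebra. Then u_{ij} = 0 unless j ≤ i ≤ n - k + j. -/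
/-- Under the quantum increasing sequence relations, `u i j = 0` unless `j ≤ i ≤ n - k + j`. -/
theorem stmt_2 {A : Type*} [NormedRing A] [StarRing A] [CStarRing A]
    [CompleteSpace A] [NormedAlgebra ℂ A] [StarModule ℂ A]
    (n k : ℕ) (hkn : k ≤ n) (u : ℕ → ℕ → A)
    (hproj : ∀ i j, 1 ≤ i → i ≤ n → 1 ≤ j → j ≤ k →
      star (u i j) = u i j ∧ u i j * u i j = u i j)
    (hcol : ∀ j, 1 ≤ j → j ≤ k → ∑ i ∈ Finset.Icc 1 n, u i j = 1)
    (hinc : ∀ i i' j j', 1 ≤ i → i ≤ n → 1 ≤ i' → i' ≤ n → 1 ≤ j → j ≤ k →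
      1 ≤ j' → j' ≤ k → j < j' → i' ≤ i → u i j * u i' j' = 0) :
    ∀ i j, 1 ≤ i → i ≤ n → 1 ≤ j → j ≤ k → ¬(j ≤ i ∧ i ≤ n - k + j) →
      u i j = 0 := by
  have key : ∀ d i i' j, 1 ≤ i → i ≤ n → 1 ≤ i' → i' ≤ n → 1 ≤ j → j + d ≤ k →
      1 ≤ d → i' < i + d → u i j * u i' (j + d) = 0 := by
    intro d
    induction d with
    | zero => intro _ _ _ _ _ _ _ _ h; omega
    | succ d ih =>
      intro i i' j hi1 hin hi'1 hi'n hj1 hjk _ hlt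
      rcases Nat.eq_zero_or_pos d with rfl | hd
      · exact hinc i i' j (j + 1) hi1 hin hi'1 hi'n hj1 (by omega) (by omega) (by omega)
          (by omega) (by omega)
      · have h1 : (∑ m ∈ Finset.Icc 1 n, u m (j + d)) = 1 := hcol (j + d) (by omega) (by omega)
        calc u i j * u i' (j + (d + 1))
            = u i j * ((∑ m ∈ Finset.Icc 1 n, u m (j + d)) * u i' (j + (d + 1))) := by
              rw [h1, one_mul]
          _ = ∑ m ∈ Finset.Icc 1 n, u i j * (u m (j + d) * u i' (j + (d + 1))) := by
              rw [Finset.sum_mul, Finset.mul_sum]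
          _ = 0 := by
              apply Finset.sum_eq_zero
              intro m hm
              simp only [Finset.mem_Icc] at hm
              by_cases hmi : i' ≤ m
              · rw [hinc m i' (j + d) (j + (d + 1)) hm.1 hm.2 hi'1 hi'n (by omega) (by omega)
                  (by omega) (by omega) (by omega) hmi, mul_zero]
              · rw [← mul_assoc, ih i m j hi1 hin hm.1 hm.2 hj1 (by omega) hd (by omega),
                  zero_mul]
  intro i j hi1 hin hj1 hjk hnot
  push_neg at hnot
  rcases Nat.lt_or_ge i j with hij | hij
  · -- case i < j
    have h1 : (∑ m ∈ Finset.Icc 1 n, u m 1) = 1 := hcol 1 (by omega) (by omega)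
    have hrw : u i j = ∑ m ∈ Finset.Icc 1 n, u m 1 * u i j := by
      rw [← Finset.sum_mul, h1, one_mul]
    rw [hrw]
    apply Finset.sum_eq_zero
    intro m hm
    simp only [Finset.mem_Icc] at hm
    have hj : u i j = u i (1 + (j - 1)) := by congr 1; omega
    rw [hj]
    exact key (j - 1) m i 1 hm.1 hm.2 hi1 hin le_rfl (by omega) (by omega) (by omega)
  · -- case i > n - k + j
    have hgt : n - k + j < i := hnot hij
    have h1 : (∑ m ∈ Finset.Icc 1 n, u m k) = 1 := hcol k (by omega) le_rfl
    have hrw : u i j = ∑ m ∈ Finset.Icc 1 n, u i j * u m k := by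
      rw [← Finset.mul_sum, h1, mul_one]
    rw [hrw]
    apply Finset.sum_eq_zero
    intro m hm
    simp only [Finset.mem_Icc] at hm
    have hk : u m k = u m (j + (k - j)) := by congr 1; omega
    rw [hk]
    exact key (k - j) i m j hi1 hin hm.1 hm.2 hj1 (by omega) (by omega) (by omega)
end

section
/- Let f_{ij} ∈ {0,1} (for 1 ≤ i ≤ n, 1 ≤ j ≤ k) be a family of scalars satisfying the quantum increasing sequence relations (viewed in ℂ, so: each f_{ij} ∈ {0,1}, each column sums to 1, and f_{ij} f_{i'j'} = 0 when j < j' and i ≥ i'). Then there is a unique strictly increasing function l : {1,…,k} → {1,…,n} such that f_{ij} = 1 if and only if l(j) = i. -/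
/-- A scalar (0/1-valued) solution of the quantum increasing sequence relations corresponds
to a unique strictly increasing sequence `l : Fin k → Fin n` with `f i j = 1 ↔ l j = i`. -/
theorem stmt_3 (n k : ℕ) (f : Fin n → Fin k → ℂ)
    (hval : ∀ i j, f i j = 0 ∨ f i j = 1)
    (hcol : ∀ j, ∑ i, f i j = 1)
    (hinc : ∀ (i i' : Fin n) (j j' : Fin k), j < j' → i' ≤ i → f i j * f i' j' = 0) :
    ∃! l : Fin k → Fin n, StrictMono l ∧ ∀ i j, (f i j = 1 ↔ l j = i) := by
  -- For each column j there is a unique i with f i j = 1.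
  have key : ∀ j, ∃! i, f i j = 1 := by
    intro j
    have hsum : (((Finset.univ.filter fun i => f i j = 1).card : ℕ) : ℂ) = 1 := by
      have h1 : ∑ i, f i j = ∑ i, (if f i j = 1 then (1:ℂ) else 0) := by
        refine Finset.sum_congr rfl fun i _ => ?_
        rcases hval i j with h | h
        · simp [h]
        · simp [h]
      rw [Finset.card_filter]
      push_cast
      conv_rhs => rw [← hcol j, h1]
    have hcard : (Finset.univ.filter fun i => f i j = 1).card = 1 := by
      exact_mod_cast hsum
    obtain ⟨i, hi⟩ := Finset.card_eq_one.mp hcard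
    refine ⟨i, ?_, ?_⟩
    · have : i ∈ Finset.univ.filter fun i => f i j = 1 := by rw [hi]; simp
      simpa using this
    · intro i' h'
      have : i' ∈ Finset.univ.filter fun i => f i j = 1 := by simp [h']
      rw [hi] at this
      simpa using this
  choose l hl hlu using key
  refine ⟨l, ⟨?_, ?_⟩, ?_⟩
  · -- strict mono
    intro j j' hjj
    by_contra h
    push_neg at h
    have := hinc (l j) (l j') j j' hjj h
    rw [hl j, hl j'] at this
    simp at this
  · intro i j
    constructor
    · intro h; exact (hlu j i h).symm
    · intro h; subst h; exact hl j
  · rintro l' ⟨_, hl'⟩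
    funext j
    exact (hl' (l j) j).mp (hl j)
end

section
/- Let 1 ≤ l_1 < l_2 < ⋯ < l_k ≤ n and let π be its canonical extension to a permutation of {1,…,n} (π(j) = l_j for j ≤ k, and π(k+m) is the least unused element, recursively). Then for all 1 ≤ m ≤ n-k one has m ≤ π(k+m) ≤ m+k; moreover, with the conventions l_0 = -∞ and l_{k+1} = +∞, π(k+m) = m+p (for 0 ≤ p ≤ k) holds if and only if l_p < m+p and l_{p+1} > m+p. -/
/-- For the canonical extension `π` of an increasing sequence `l` to a permutation of
`{1,…,n}`, one has `m ≤ π (k+m) ≤ m + k` for `1 ≤ m ≤ n-k`, and `π (k+m) = m + p`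
(for `0 ≤ p ≤ k`) iff `l p < m + p` and `l (p+1) > m + p`, with the conventions
`l 0 = -∞` (encoded as `p = 0`) and `l (k+1) = +∞` (encoded as `p = k`). -/
theorem stmt_5 (n k : ℕ) (hkn : k ≤ n) (l : ℕ → ℕ)
    (hrange : ∀ j, 1 ≤ j → j ≤ k → 1 ≤ l j ∧ l j ≤ n)
    (hmono : ∀ j j', 1 ≤ j → j < j' → j' ≤ k → l j < l j')
    (π : ℕ → ℕ)
    (hπl : ∀ j, 1 ≤ j → j ≤ k → π j = l j)
    (hπrec : ∀ m, 1 ≤ m → m ≤ n - k →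
      π (k + m) = sInf {x : ℕ | 1 ≤ x ∧ x ≤ n ∧ ∀ r, 1 ≤ r → r < k + m → π r ≠ x}) :
    (∀ m, 1 ≤ m → m ≤ n - k → m ≤ π (k + m) ∧ π (k + m) ≤ m + k) ∧
    (∀ m p, 1 ≤ m → m ≤ n - k → p ≤ k →
      (π (k + m) = m + p ↔
        ((p = 0 ∨ l p < m + p) ∧ (p = k ∨ l (p + 1) > m + p)))) := by
  classical
  -- growth estimate for l
  have hgrow : ∀ a d, 1 ≤ a → a + d ≤ k → l a + d ≤ l (a + d) := by
    intro a d ha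
    induction d with
    | zero => simp
    | succ d ih =>
      intro hdk
      have h1 : l (a + d) < l (a + d + 1) := hmono _ _ (by omega) (by omega) (by omega)
      have h2 := ih (by omega)
      show l a + (d + 1) ≤ l (a + d + 1)
      omega
  -- nonemptiness of the defining set
  have hSne : ∀ m, 1 ≤ m → m ≤ n - k →
      {x : ℕ | 1 ≤ x ∧ x ≤ n ∧ ∀ r, 1 ≤ r → r < k + m → π r ≠ x}.Nonempty := by
    intro m hm hmn
    have hcard : ((Finset.Icc 1 (k + m - 1)).image π).card ≤ k + m - 1 :=
      Finset.card_image_le.trans (by simp)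
    have hne : (Finset.Icc 1 n \ (Finset.Icc 1 (k + m - 1)).image π).Nonempty := by
      rw [← Finset.card_pos]
      have h2 := Finset.le_card_sdiff ((Finset.Icc 1 (k + m - 1)).image π) (Finset.Icc 1 n)
      have hn : (Finset.Icc 1 n).card = n := by simp
      omega
    obtain ⟨x, hx⟩ := hne
    rw [Finset.mem_sdiff, Finset.mem_Icc] at hx
    refine ⟨x, hx.1.1, hx.1.2, ?_⟩
    intro r hr hrm hrx
    exact hx.2 (Finset.mem_image.2 ⟨r, Finset.mem_Icc.2 (by omega), hrx⟩)
  have hmemS : ∀ m, 1 ≤ m → m ≤ n - k →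
      1 ≤ π (k + m) ∧ π (k + m) ≤ n ∧ ∀ r, 1 ≤ r → r < k + m → π r ≠ π (k + m) := by
    intro m hm hmn
    have := Nat.sInf_mem (hSne m hm hmn)
    rw [← hπrec m hm hmn] at this
    exact this
  have hleS : ∀ m, 1 ≤ m → m ≤ n - k → ∀ x, 1 ≤ x → x ≤ n →
      (∀ r, 1 ≤ r → r < k + m → π r ≠ x) → π (k + m) ≤ x := by
    intro m hm hmn x hx1 hxn hxr
    rw [hπrec m hm hmn]
    exact Nat.sInf_le ⟨hx1, hxn, hxr⟩
  -- π (k + ·) is strictly increasing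
  have hsm : ∀ r m, 1 ≤ r → r < m → m ≤ n - k → π (k + r) < π (k + m) := by
    intro r m hr hrm hmn
    have h1 := hmemS m (by omega) hmn
    have h2 := hleS r hr (by omega) (π (k + m)) h1.1 h1.2.1
      (fun s hs hsr => h1.2.2 s hs (by omega))
    have h3 := h1.2.2 (k + r) (by omega) (by omega)
    omega
  -- avoided values: π (k+m) is not an l-value
  have hnotL : ∀ m, 1 ≤ m → m ≤ n - k → ∀ j, 1 ≤ j → j ≤ k → l j ≠ π (k + m) := by
    intro m hm hmn j hj hjk
    have := (hmemS m hm hmn).2.2 j hj (by omega)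
    rwa [hπl j hj hjk] at this
  -- everything below π(k+m) outside L is hit earlier
  have hsurj : ∀ m, 1 ≤ m → m ≤ n - k → ∀ x, 1 ≤ x → x ≤ n →
      (∀ j, 1 ≤ j → j ≤ k → l j ≠ x) → x < π (k + m) →
      ∃ r, 1 ≤ r ∧ r < m ∧ π (k + r) = x := by
    intro m hm hmn x hx1 hxn hxL hxlt
    by_contra hcon
    push_neg at hcon
    have hle : π (k + m) ≤ x := by
      apply hleS m hm hmn x hx1 hxn
      intro r hr hrm
      by_cases hrk : r ≤ k
      · rw [hπl r hr hrk]; exact hxL r hr hrk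
      · have hr' : r = k + (r - k) := by omega
        rw [hr']
        exact hcon (r - k) (by omega) (by omega)
    omega
  -- the key counting identity
  have hkey : ∀ m, 1 ≤ m → m ≤ n - k →
      π (k + m) = m + ((Finset.Icc 1 k).filter (fun j => l j ≤ π (k + m))).card := by
    intro m hm hmn
    have hxm := hmemS m hm hmn
    set x := π (k + m) with hxdef
    have hIcc : Finset.Icc 1 x =
        ((Finset.Icc 1 k).filter (fun j => l j ≤ x)).image l ∪
        (Finset.Icc 1 m).image (fun r => π (k + r)) := by
      ext y
      simp only [Finset.mem_Icc, Finset.mem_union, Finset.mem_image, Finset.mem_filter]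
      constructor
      · rintro ⟨hy1, hy2⟩
        rcases eq_or_lt_of_le hy2 with rfl | hylt
        · exact Or.inr ⟨m, by omega, rfl⟩
        · by_cases hyL : ∃ j, 1 ≤ j ∧ j ≤ k ∧ l j = y
          · obtain ⟨j, hj1, hj2, hj3⟩ := hyL
            exact Or.inl ⟨j, ⟨⟨hj1, hj2⟩, by omega⟩, hj3⟩
          · push_neg at hyL
            obtain ⟨r, hr1, hr2, hr3⟩ := hsurj m hm hmn y hy1 (by omega)
              (fun j hj hjk => hyL j hj hjk) hylt
            exact Or.inr ⟨r, by omega, hr3⟩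
      · rintro (⟨j, ⟨hj, hjx⟩, rfl⟩ | ⟨r, hr, rfl⟩)
        · exact ⟨(hrange j hj.1 hj.2).1, hjx⟩
        · have h1 := hmemS r hr.1 (by omega)
          rcases eq_or_lt_of_le hr.2 with rfl | hrm
          · exact ⟨h1.1, le_refl _⟩
          · exact ⟨h1.1, le_of_lt (hsm r m hr.1 hrm hmn)⟩
    have hinjl : Set.InjOn l ↑((Finset.Icc 1 k).filter (fun j => l j ≤ x)) := by
      intro a ha b hb hab
      rw [Finset.coe_filter, Set.mem_setOf_eq, Finset.mem_Icc] at ha hb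
      by_contra hne
      rcases lt_or_gt_of_ne hne with h | h
      · exact absurd hab (Nat.ne_of_lt (hmono a b ha.1.1 h hb.1.2))
      · exact absurd hab.symm (Nat.ne_of_lt (hmono b a hb.1.1 h ha.1.2))
    have hinjπ : Set.InjOn (fun r => π (k + r)) ↑(Finset.Icc 1 m) := by
      intro a ha b hb hab
      rw [Finset.coe_Icc, Set.mem_Icc] at ha hb
      by_contra hne
      rcases lt_or_gt_of_ne hne with h | h
      · exact absurd hab (Nat.ne_of_lt (hsm a b ha.1 h (by omega)))
      · exact absurd hab.symm (Nat.ne_of_lt (hsm b a hb.1 h (by omega)))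
    have hdisj : Disjoint (((Finset.Icc 1 k).filter (fun j => l j ≤ x)).image l)
        ((Finset.Icc 1 m).image (fun r => π (k + r))) := by
      rw [Finset.disjoint_left]
      rintro y hy1 hy2
      obtain ⟨j, hj, rfl⟩ := Finset.mem_image.1 hy1
      obtain ⟨r, hr, hry⟩ := Finset.mem_image.1 hy2
      rw [Finset.mem_filter, Finset.mem_Icc] at hj
      rw [Finset.mem_Icc] at hr
      exact hnotL r hr.1 (by omega) j hj.1.1 hj.1.2 hry.symm
    have hc := congrArg Finset.card hIcc
    rw [Finset.card_union_of_disjoint hdisj, Finset.card_image_of_injOn hinjl,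
        Finset.card_image_of_injOn hinjπ] at hc
    simp only [Nat.card_Icc] at hc
    omega
  -- properties of p = card of the filter
  have hpk : ∀ m, 1 ≤ m → m ≤ n - k →
      ((Finset.Icc 1 k).filter (fun j => l j ≤ π (k + m))).card ≤ k := by
    intro m hm hmn
    calc ((Finset.Icc 1 k).filter (fun j => l j ≤ π (k + m))).card
        ≤ (Finset.Icc 1 k).card := Finset.card_filter_le _ _
      _ = k := by simp
  have hcond : ∀ m, 1 ≤ m → m ≤ n - k →
      (∀ p, p = ((Finset.Icc 1 k).filter (fun j => l j ≤ π (k + m))).card →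
        (1 ≤ p → l p < π (k + m)) ∧ (p < k → l (p + 1) > π (k + m))) := by
    intro m hm hmn p hp
    have hpk' : p ≤ k := hp ▸ hpk m hm hmn
    set x := π (k + m) with hxdef
    constructor
    · intro hp1
      -- p ∈ filter
      have hmem : p ∈ (Finset.Icc 1 k).filter (fun j => l j ≤ x) := by
        by_contra hno
        have hsub : (Finset.Icc 1 k).filter (fun j => l j ≤ x) ⊆ Finset.Icc 1 (p - 1) := by
          intro j hj
          rw [Finset.mem_filter, Finset.mem_Icc] at hj
          rw [Finset.mem_Icc]
          refine ⟨hj.1.1, ?_⟩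
          by_contra hjp
          -- j ≥ p, so l p ≤ l j ≤ x, so p ∈ filter
          have hlp : l p ≤ l j := by
            have := hgrow p (j - p) hp1 (by omega)
            have hj' : p + (j - p) = j := by omega
            rw [hj'] at this
            omega
          exact hno (Finset.mem_filter.2 ⟨Finset.mem_Icc.2 ⟨hp1, hpk'⟩, le_trans hlp hj.2⟩)
        have := Finset.card_le_card hsub
        rw [← hp] at this
        simp only [Nat.card_Icc] at this
        omega
      rw [Finset.mem_filter] at hmem
      have hne := hnotL m hm hmn p hp1 hpk'
      omega
    · intro hpk2
      by_contra hle
      push_neg at hle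
      have hsub : Finset.Icc 1 (p + 1) ⊆ (Finset.Icc 1 k).filter (fun j => l j ≤ x) := by
        intro j hj
        rw [Finset.mem_Icc] at hj
        rw [Finset.mem_filter, Finset.mem_Icc]
        refine ⟨⟨hj.1, by omega⟩, ?_⟩
        have := hgrow j (p + 1 - j) hj.1 (by omega)
        have hj' : j + (p + 1 - j) = p + 1 := by omega
        rw [hj'] at this
        omega
      have := Finset.card_le_card hsub
      rw [← hp] at this
      simp only [Nat.card_Icc] at this
      omega
  -- uniqueness of p satisfying the conditions
  have huniq : ∀ m p q, 1 ≤ m → p ≤ k → q ≤ k →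
      ((p = 0 ∨ l p < m + p) ∧ (p = k ∨ l (p + 1) > m + p)) →
      ((q = 0 ∨ l q < m + q) ∧ (q = k ∨ l (q + 1) > m + q)) → p = q := by
    intro m p q hm hpk' hqk' hpc hqc
    by_contra hne
    -- wlog p < q
    have key : ∀ a b, a < b → b ≤ k →
        ((a = 0 ∨ l a < m + a) ∧ (a = k ∨ l (a + 1) > m + a)) →
        ((b = 0 ∨ l b < m + b) ∧ (b = k ∨ l (b + 1) > m + b)) → False := by
      intro a b hab hbk' hac hbc
      have hb1 : 1 ≤ b := by omega
      have hlb : l b < m + b := by rcases hbc.1 with h | h; omega; exact h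
      have hla : l (a + 1) > m + a := by rcases hac.2 with h | h; omega; exact h
      have := hgrow (a + 1) (b - (a + 1)) (by omega) (by omega)
      have hb' : a + 1 + (b - (a + 1)) = b := by omega
      rw [hb'] at this
      omega
    rcases lt_or_gt_of_ne hne with h | h
    · exact key p q h hqk' hpc hqc
    · exact key q p h hpk' hqc hpc
  constructor
  · intro m hm hmn
    have h1 := hkey m hm hmn
    have h2 := hpk m hm hmn
    omega
  · intro m p hm hmn hpk'
    set p0 := ((Finset.Icc 1 k).filter (fun j => l j ≤ π (k + m))).card with hp0
    have h1 := hkey m hm hmn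
    have h2 := hpk m hm hmn
    have h3 := hcond m hm hmn p0 rfl
    have hc0 : (p0 = 0 ∨ l p0 < m + p0) ∧ (p0 = k ∨ l (p0 + 1) > m + p0) := by
      constructor
      · by_cases h : p0 = 0
        · exact Or.inl h
        · exact Or.inr (by have := h3.1 (by omega); omega)
      · by_cases h : p0 = k
        · exact Or.inl h
        · exact Or.inr (by have := h3.2 (by omega); omega)
    constructor
    · intro heq
      have : p = p0 := by omega
      rw [this]
      exact hc0
    · intro hc
      have : p = p0 := huniq m p p0 hm hpk' h2 hc hc0
      omega
end

section
/- Let v_{ij} (1 ≤ i ≤ n, 1 ≤ j ≤ k) satisfy the quantum increasing sequence relations in a C*-algebra A, with the conventions v_{00} = 1 and v_{i0} = v_{0i} = v_{i(k+1)} = 0 for i ≥ 1. Then for 0 < p < k and 1 ≤ l ≤ n, the projection inequality v_{l(p+1)} ≤ Σ_{i=1}^{l-1} v_{ip} holds; equivalently, v_{l(p+1)} · (Σ_{i=1}^{l-1} v_{ip}) = v_{l(p+1)}. -/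
/-- Under the quantum increasing sequence relations (with conventions `v 0 0 = 1`,
`v i 0 = v 0 i = v i (k+1) = 0` for `i ≥ 1`), for `0 < p < k` and `1 ≤ l ≤ n` one has
`v l (p+1) ≤ Σ_{i=1}^{l-1} v i p`, i.e. `v l (p+1) * (Σ_{i=1}^{l-1} v i p) = v l (p+1)`. -/
theorem stmt_6 {A : Type*} [NormedRing A] [StarRing A] [CStarRing A]
    [CompleteSpace A] [NormedAlgebra ℂ A] [StarModule ℂ A]
    (n k : ℕ) (hkn : k ≤ n) (v : ℕ → ℕ → A)
    (hproj : ∀ i j, 1 ≤ i → i ≤ n → 1 ≤ j → j ≤ k →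
      star (v i j) = v i j ∧ v i j * v i j = v i j)
    (hcol : ∀ j, 1 ≤ j → j ≤ k → ∑ i ∈ Finset.Icc 1 n, v i j = 1)
    (hinc : ∀ i i' j j', 1 ≤ i → i ≤ n → 1 ≤ i' → i' ≤ n → 1 ≤ j → j ≤ k →
      1 ≤ j' → j' ≤ k → j < j' → i' ≤ i → v i j * v i' j' = 0)
    (hv00 : v 0 0 = 1)
    (hconv : ∀ i, 1 ≤ i → v i 0 = 0 ∧ v 0 i = 0 ∧ v i (k + 1) = 0) :
    ∀ p l, 0 < p → p < k → 1 ≤ l → l ≤ n →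
      v l (p + 1) * (∑ i ∈ Finset.Ico 1 l, v i p) = v l (p + 1) := by
  intro p l hp hpk hl hln
  have hp1 : 1 ≤ p := hp
  have hpk' : p ≤ k := hpk.le
  have hp1k : p + 1 ≤ k := hpk
  -- full column sum
  have hfull : v l (p + 1) * (∑ i ∈ Finset.Icc 1 n, v i p) = v l (p + 1) := by
    rw [hcol p hp1 hpk', mul_one]
  have hsplit : (∑ i ∈ Finset.Icc 1 n, v i p)
      = (∑ i ∈ Finset.Ico 1 l, v i p) + ∑ i ∈ Finset.Ico l (n + 1), v i p := by
    rw [show Finset.Icc 1 n = Finset.Ico 1 (n + 1) from by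
      rw [Finset.Ico_add_one_right_eq_Icc]]
    exact (Finset.sum_Ico_consecutive _ hl (Nat.le_succ_of_le hln)).symm
  have hzero : ∀ i ∈ Finset.Ico l (n + 1), v l (p + 1) * v i p = 0 := by
    intro i hi
    simp only [Finset.mem_Ico, Nat.lt_succ_iff] at hi
    have hi1 : 1 ≤ i := le_trans hl hi.1
    have hin : i ≤ n := hi.2
    have h0 : v i p * v l (p + 1) = 0 :=
      hinc i l p (p + 1) hi1 hin hl hln hp1 hpk' (by omega) hp1k (by omega) hi.1
    have hsi : star (v i p) = v i p := (hproj i p hi1 hin hp1 hpk').1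
    have hsl : star (v l (p + 1)) = v l (p + 1) :=
      (hproj l (p + 1) hl hln (by omega) hp1k).1
    calc v l (p + 1) * v i p = star (v i p * v l (p + 1)) := by
          rw [star_mul, hsi, hsl]
      _ = 0 := by rw [h0, star_zero]
  have : v l (p + 1) * (∑ i ∈ Finset.Ico l (n + 1), v i p) = 0 := by
    rw [Finset.mul_sum]
    exact Finset.sum_eq_zero hzero
  calc v l (p + 1) * (∑ i ∈ Finset.Ico 1 l, v i p)
      = v l (p + 1) * (∑ i ∈ Finset.Ico 1 l, v i p)
        + v l (p + 1) * (∑ i ∈ Finset.Ico l (n + 1), v i p) := by rw [this, add_zero]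
    _ = v l (p + 1) * (∑ i ∈ Finset.Icc 1 n, v i p) := by rw [hsplit, mul_add]
    _ = v l (p + 1) := hfull
end

section
/- Fix k < n. Let v_{ij} (1 ≤ i ≤ n, 1 ≤ j ≤ k) satisfy the quantum increasing sequence relations in a unital C*-algebra A, with conventions v_{00} = 1 and v_{i0} = v_{0i} = v_{i(k+1)} = 0 for i ≥ 1. Define u_{ij} ∈ A for 1 ≤ i,j ≤ n by: u_{ij} = v_{ij} if j ≤ k; u_{i(k+m)} = 0 if i < m or i > m+k (for 1 ≤ m ≤ n-k); and u_{(m+p)(k+m)} = Σ_{i=0}^{m+p-1} (v_{ip} - v_{(i+1)(p+1)}) for 1 ≤ m ≤ n-k, 0 ≤ p ≤ k. Then each u_{ij} is a projection. -/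
/-- In a C*-algebra, projections summing to 1 are pairwise orthogonal. -/
lemma orth_aux {A : Type*} [NormedRing A] [StarRing A] [CStarRing A]
    [CompleteSpace A] [NormedAlgebra ℂ A] [StarModule ℂ A]
    {s : Finset ℕ} {p : ℕ → A}
    (hsa : ∀ i ∈ s, star (p i) = p i) (hidem : ∀ i ∈ s, p i * p i = p i)
    (hsum : ∑ i ∈ s, p i = 1) :
    ∀ a ∈ s, ∀ b ∈ s, a ≠ b → p a * p b = 0 := by
  letI : CStarAlgebra A := ⟨⟩
  letI := CStarAlgebra.spectralOrder A
  haveI := CStarAlgebra.spectralOrderedRing A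
  intro a ha b hb hab
  have key : ∑ i ∈ s.erase a, p a * p i * p a = 0 := by
    have h1 : ∑ i ∈ s, p a * p i * p a = p a := by
      simp_rw [mul_assoc, ← Finset.mul_sum, ← Finset.sum_mul, hsum, one_mul, hidem a ha]
    rw [← Finset.add_sum_erase s _ ha] at h1
    have h2 : p a * p a * p a = p a := by rw [hidem a ha, hidem a ha]
    rw [h2] at h1
    exact (add_eq_left).mp h1
  have hterm : ∀ i ∈ s.erase a, p a * p i * p a = star (p i * p a) * (p i * p a) := by
    intro i hi
    have his := Finset.mem_of_mem_erase hi
    rw [star_mul, hsa i his, hsa a ha]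
    calc p a * p i * p a = p a * (p i * p i) * p a := by rw [hidem i his]
    _ = p a * p i * (p i * p a) := by noncomm_ring
  have hz : ∀ i ∈ s.erase a, p a * p i * p a = 0 := by
    have hnn : ∀ i ∈ s.erase a, 0 ≤ p a * p i * p a := by
      intro i hi; rw [hterm i hi]; exact star_mul_self_nonneg _
    exact fun i hi => (Finset.sum_eq_zero_iff_of_nonneg hnn).mp key i hi
  have hbmem : b ∈ s.erase a := Finset.mem_erase.mpr ⟨fun h => hab h.symm, hb⟩
  have hba : p b * p a = 0 := by
    have := hz b hbmem
    rw [hterm b hbmem] at this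
    rwa [CStarRing.star_mul_self_eq_zero_iff] at this
  have := congrArg star hba
  rwa [star_mul, hsa a ha, hsa b hb, star_zero] at this

/-- Extension of quantum increasing sequences to quantum permutations (statement 7). -/
theorem stmt_7 {A : Type*} [NormedRing A] [StarRing A] [CStarRing A]
    [CompleteSpace A] [NormedAlgebra ℂ A] [StarModule ℂ A]
    (n k : ℕ) (hkn : k < n) (v : ℕ → ℕ → A)
    (hproj : ∀ i j, 1 ≤ i → i ≤ n → 1 ≤ j → j ≤ k →
      star (v i j) = v i j ∧ v i j * v i j = v i j)
    (hcol : ∀ j, 1 ≤ j → j ≤ k → ∑ i ∈ Finset.Icc 1 n, v i j = 1)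
    (hinc : ∀ i i' j j', 1 ≤ i → i ≤ n → 1 ≤ i' → i' ≤ n → 1 ≤ j → j ≤ k →
      1 ≤ j' → j' ≤ k → j < j' → i' ≤ i → v i j * v i' j' = 0)
    (hv00 : v 0 0 = 1)
    (hconv : ∀ i, 1 ≤ i → v i 0 = 0 ∧ v 0 i = 0 ∧ v i (k + 1) = 0)
    (u : ℕ → ℕ → A)
    (hu1 : ∀ i j, 1 ≤ i → i ≤ n → 1 ≤ j → j ≤ k → u i j = v i j)
    (hu2 : ∀ i m, 1 ≤ i → i ≤ n → 1 ≤ m → m ≤ n - k → (i < m ∨ m + k < i) →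
      u i (k + m) = 0)
    (hu3 : ∀ m p, 1 ≤ m → m ≤ n - k → p ≤ k →
      u (m + p) (k + m) = ∑ i ∈ Finset.range (m + p), (v i p - v (i + 1) (p + 1))) :
    ∀ i j, 1 ≤ i → i ≤ n → 1 ≤ j → j ≤ n →
      star (u i j) = u i j ∧ u i j * u i j = u i j := by
  -- generalized selfadjointness / idempotence / orthogonality including index 0
  have sa : ∀ a b, a ≤ n → b ≤ k → star (v a b) = v a b := by
    intro a b han hbk
    rcases Nat.eq_zero_or_pos a with ha | ha
    · rcases Nat.eq_zero_or_pos b with hb | hb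
      · subst ha; subst hb; rw [hv00]; exact star_one A
      · subst ha; rw [(hconv b hb).2.1]; exact star_zero A
    · rcases Nat.eq_zero_or_pos b with hb | hb
      · subst hb; rw [(hconv a ha).1]; exact star_zero A
      · exact (hproj a b ha han hb hbk).1
  have idem : ∀ a b, a ≤ n → b ≤ k → v a b * v a b = v a b := by
    intro a b han hbk
    rcases Nat.eq_zero_or_pos a with ha | ha
    · rcases Nat.eq_zero_or_pos b with hb | hb
      · subst ha; subst hb; rw [hv00, one_mul]
      · subst ha; rw [(hconv b hb).2.1, mul_zero]
    · rcases Nat.eq_zero_or_pos b with hb | hb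
      · subst hb; rw [(hconv a ha).1, mul_zero]
      · exact (hproj a b ha han hb hbk).2
  have orthv : ∀ b, 1 ≤ b → b ≤ k → ∀ a a', 1 ≤ a → a ≤ n → 1 ≤ a' → a' ≤ n →
      a ≠ a' → v a b * v a' b = 0 := by
    intro b hb1 hbk a a' ha1 han ha'1 ha'n hne
    refine orth_aux (s := Finset.Icc 1 n) (p := fun i => v i b) ?_ ?_ (hcol b hb1 hbk)
      a (Finset.mem_Icc.mpr ⟨ha1, han⟩) a' (Finset.mem_Icc.mpr ⟨ha'1, ha'n⟩) hne
    · intro i hi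
      obtain ⟨h1, h2⟩ := Finset.mem_Icc.mp hi
      exact sa i b h2 hbk
    · intro i hi
      obtain ⟨h1, h2⟩ := Finset.mem_Icc.mp hi
      exact idem i b h2 hbk
  have orth0 : ∀ b, b ≤ k → ∀ a a', a ≤ n → a' ≤ n → a ≠ a' → v a b * v a' b = 0 := by
    intro b hbk a a' han ha'n hne
    rcases Nat.eq_zero_or_pos b with hb | hb
    · subst hb
      rcases Nat.eq_zero_or_pos a with ha | ha
      · have ha' : 1 ≤ a' := by omega
        rw [(hconv a' ha').1, mul_zero]
      · rw [(hconv a ha).1, zero_mul]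
    · rcases Nat.eq_zero_or_pos a with ha | ha
      · subst ha; rw [(hconv b hb).2.1, zero_mul]
      · rcases Nat.eq_zero_or_pos a' with ha' | ha'
        · subst ha'; rw [(hconv b hb).2.1, mul_zero]
        · exact orthv b hb hbk a a' ha han ha' ha'n hne
  intro i j hi1 hin hj1 hjn
  by_cases hjk : j ≤ k
  · rw [hu1 i j hi1 hin hj1 hjk]; exact hproj i j hi1 hin hj1 hjk
  · push_neg at hjk
    set m := j - k with hm
    have hm1 : 1 ≤ m := by omega
    have hmn : m ≤ n - k := by omega
    have hj : j = k + m := by omega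
    by_cases hcase : i < m ∨ m + k < i
    · rw [hj, hu2 i m hi1 hin hm1 hmn hcase]
      exact ⟨star_zero A, mul_zero 0⟩
    · push_neg at hcase
      obtain ⟨hmi, him⟩ := hcase
      set p := i - m with hpdef
      have hp : p ≤ k := by omega
      have hi : i = m + p := by omega
      have hN1 : 1 ≤ m + p := by omega
      have hNn : m + p ≤ n := by omega
      rw [hj, hi, hu3 m p hm1 hmn hp, Finset.sum_sub_distrib]
      set Ae := ∑ x ∈ Finset.range (m + p), v x p with hAe
      set Be := ∑ x ∈ Finset.range (m + p), v (x + 1) (p + 1) with hBe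
      have hAsa : star Ae = Ae := by
        rw [hAe, star_sum]
        exact Finset.sum_congr rfl fun x hx =>
          sa x p (by have := Finset.mem_range.mp hx; omega) hp
      have hA2 : Ae * Ae = Ae := by
        rw [hAe, Finset.sum_mul_sum]
        refine Finset.sum_congr rfl fun x hx => ?_
        have hxn : x ≤ n := by have := Finset.mem_range.mp hx; omega
        rw [Finset.sum_eq_single_of_mem x hx
          (fun b hb hne => orth0 p hp x b hxn
            (by have := Finset.mem_range.mp hb; omega) (Ne.symm hne))]
        exact idem x p hxn hp
      -- the B column : split on whether p = k
      by_cases hpk : p = k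
      · have hB0 : Be = 0 := by
          rw [hBe]
          refine Finset.sum_eq_zero fun x hx => ?_
          rw [hpk]; exact (hconv (x + 1) (by omega)).2.2
        rw [hB0, sub_zero]
        exact ⟨hAsa, hA2⟩
      · have hp1k : p + 1 ≤ k := by omega
        have hBsa : star Be = Be := by
          rw [hBe, star_sum]
          exact Finset.sum_congr rfl fun x hx =>
            sa (x + 1) (p + 1) (by have := Finset.mem_range.mp hx; omega) hp1k
        have hB2 : Be * Be = Be := by
          rw [hBe, Finset.sum_mul_sum]
          refine Finset.sum_congr rfl fun x hx => ?_
          have hxn : x + 1 ≤ n := by have := Finset.mem_range.mp hx; omega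
          rw [Finset.sum_eq_single_of_mem x hx
            (fun b hb hne => orth0 (p + 1) hp1k (x + 1) (b + 1) hxn
              (by have := Finset.mem_range.mp hb; omega) (by omega))]
          exact idem (x + 1) (p + 1) hxn hp1k
        have hAB : Ae * Be = Be := by
          rcases Nat.eq_zero_or_pos p with hp0 | hp0
          · -- p = 0 : Ae = 1
            have hA1 : Ae = 1 := by
              rw [hAe, hp0]
              rw [Finset.sum_eq_single_of_mem 0 (Finset.mem_range.mpr (by omega))
                (fun b hb hne => (hconv b (by omega)).1)]
              exact hv00
            rw [hA1, one_mul]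
          · rw [hBe, Finset.mul_sum]
            refine Finset.sum_congr rfl fun x hx => ?_
            have hxN : x + 1 ≤ m + p := by have := Finset.mem_range.mp hx; omega
            rw [hAe, Finset.sum_mul]
            have hext : ∑ y ∈ Finset.range (m + p), v y p * v (x + 1) (p + 1)
                = ∑ y ∈ Finset.range (n + 1), v y p * v (x + 1) (p + 1) := by
              refine Finset.sum_subset
                (Finset.range_subset_range.mpr (by omega)) fun y hy hyn => ?_
              have hy1 : y < n + 1 := Finset.mem_range.mp hy
              have hyN : m + p ≤ y := by
                by_contra h; exact hyn (Finset.mem_range.mpr (by omega))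
              exact hinc y (x + 1) p (p + 1) (by omega) (by omega) (by omega)
                (by omega) hp0 (by omega) (by omega) hp1k (by omega) (by omega)
            rw [hext]
            have hicc : ∑ y ∈ Finset.range (n + 1), v y p * v (x + 1) (p + 1)
                = ∑ y ∈ Finset.Icc 1 n, v y p * v (x + 1) (p + 1) := by
              symm
              refine Finset.sum_subset (fun y hy => Finset.mem_range.mpr
                (by have := Finset.mem_Icc.mp hy; omega)) fun y hy hyn => ?_
              have hy0 : y = 0 := by
                have := Finset.mem_range.mp hy
                by_contra h
                exact hyn (Finset.mem_Icc.mpr (by omega))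
              rw [hy0, (hconv p hp0).2.1, zero_mul]
            rw [hicc, ← Finset.sum_mul, hcol p hp0 hp, one_mul]
        have hBA : Be * Ae = Be := by
          have := congrArg star hAB
          rwa [star_mul, hAsa, hBsa] at this
        constructor
        · rw [star_sub, hAsa, hBsa]
        · rw [sub_mul, mul_sub, mul_sub, hA2, hAB, hBA, hB2]
          abel
end

section
/- Fix k < n. Let v_{ij} satisfy the quantum increasing sequence relations in a unital C*-algebra A (with conventions v_{00} = 1 and v_{i0} = v_{0i} = v_{i(k+1)} = 0 for i ≥ 1), and define u_{ij} (1 ≤ i,j ≤ n) as in the canonical extension: u_{ij} = v_{ij} for j ≤ k; u_{i(k+m)} = 0 unless m ≤ i ≤ m+k; u_{(m+p)(k+m)} = Σ_{i=0}^{m+p-1} (v_{ip} - v_{(i+1)(p+1)}). Then every column of (u_{ij}) sums to 1: Σ_{i=1}^n u_{ij} = 1 for each 1 ≤ j ≤ n. -/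
/-- Extension of quantum increasing sequences to quantum permutations (statement 8). -/
theorem stmt_8 {A : Type*} [NormedRing A] [StarRing A] [CStarRing A]
    [CompleteSpace A] [NormedAlgebra ℂ A] [StarModule ℂ A]
    (n k : ℕ) (hkn : k < n) (v : ℕ → ℕ → A)
    (hproj : ∀ i j, 1 ≤ i → i ≤ n → 1 ≤ j → j ≤ k →
      star (v i j) = v i j ∧ v i j * v i j = v i j)
    (hcol : ∀ j, 1 ≤ j → j ≤ k → ∑ i ∈ Finset.Icc 1 n, v i j = 1)
    (hinc : ∀ i i' j j', 1 ≤ i → i ≤ n → 1 ≤ i' → i' ≤ n → 1 ≤ j → j ≤ k →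
      1 ≤ j' → j' ≤ k → j < j' → i' ≤ i → v i j * v i' j' = 0)
    (hv00 : v 0 0 = 1)
    (hconv : ∀ i, 1 ≤ i → v i 0 = 0 ∧ v 0 i = 0 ∧ v i (k + 1) = 0)
    (u : ℕ → ℕ → A)
    (hu1 : ∀ i j, 1 ≤ i → i ≤ n → 1 ≤ j → j ≤ k → u i j = v i j)
    (hu2 : ∀ i m, 1 ≤ i → i ≤ n → 1 ≤ m → m ≤ n - k → (i < m ∨ m + k < i) →
      u i (k + m) = 0)
    (hu3 : ∀ m p, 1 ≤ m → m ≤ n - k → p ≤ k →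
      u (m + p) (k + m) = ∑ i ∈ Finset.range (m + p), (v i p - v (i + 1) (p + 1))) :
    ∀ j, 1 ≤ j → j ≤ n → ∑ i ∈ Finset.Icc 1 n, u i j = 1 := by
  intro j hj1 hjn
  by_cases hjk : j ≤ k
  · rw [← hcol j hj1 hjk]
    refine Finset.sum_congr rfl fun i hi => ?_
    rw [Finset.mem_Icc] at hi
    exact hu1 i j hi.1 hi.2 hj1 hjk
  · push_neg at hjk
    obtain ⟨m, rfl⟩ : ∃ m, j = k + m := ⟨j - k, by omega⟩
    have hm1 : 1 ≤ m := by omega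
    have hmn : m ≤ n - k := by omega
    -- restrict the sum to Icc m (m+k)
    have hsub : Finset.Icc m (m + k) ⊆ Finset.Icc 1 n := by
      intro i hi
      rw [Finset.mem_Icc] at hi ⊢
      omega
    have hzero : ∀ i ∈ Finset.Icc 1 n, i ∉ Finset.Icc m (m + k) → u i (k + m) = 0 := by
      intro i hi hni
      rw [Finset.mem_Icc] at hi
      rw [Finset.mem_Icc] at hni
      exact hu2 i m hi.1 hi.2 hm1 hmn (by omega)
    rw [← Finset.sum_subset hsub hzero]
    rw [← Finset.Ico_add_one_right_eq_Icc, Finset.sum_Ico_eq_sum_range]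
    have hrange : m + k + 1 - m = k + 1 := by omega
    rw [hrange]
    set T : ℕ → A := fun p => ∑ i ∈ Finset.range (m + p), v i p with hT
    have hterm : ∀ p ∈ Finset.range (k + 1), u (m + p) (k + m) = T p - T (p + 1) := by
      intro p hp
      rw [Finset.mem_range] at hp
      rw [hu3 m p hm1 hmn (by omega), Finset.sum_sub_distrib]
      congr 1
      have : ∑ i ∈ Finset.range (m + p), v (i + 1) (p + 1)
          = ∑ i ∈ Finset.range (m + p + 1), v i (p + 1) - v 0 (p + 1) := by
        rw [Finset.sum_range_succ']
        abel
      rw [this, (hconv (p + 1) (by omega)).2.1, sub_zero, hT]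
      simp only
      congr 1
    rw [Finset.sum_congr rfl hterm, Finset.sum_range_sub' T]
    have hT0 : T 0 = 1 := by
      rw [hT]
      simp only [Nat.add_zero]
      rw [Finset.sum_eq_single_of_mem 0 (Finset.mem_range.2 (by omega))
        (fun b _ hb => (hconv b (by omega)).1), hv00]
    have hTk : T (k + 1) = 0 := by
      rw [hT]
      refine Finset.sum_eq_zero fun i _ => ?_
      rcases Nat.eq_zero_or_pos i with h | h
      · subst h; exact (hconv (k + 1) (by omega)).2.1
      · exact (hconv i h).2.2
    rw [hT0, hTk, sub_zero]
end

section
/- Fix k < n. Let v_{ij} satisfy the quantum increasing sequence relations in a unital C*-algebra A (with conventions v_{00} = 1 and v_{i0} = v_{0i} = v_{i(k+1)} = 0 for i ≥ 1), and define u_{ij} (1 ≤ i,j ≤ n) by u_{ij} = v_{ij} for j ≤ k; u_{i(k+m)} = 0 unless m ≤ i ≤ m+k; u_{(m+p)(k+m)} = Σ_{i=0}^{m+p-1} (v_{ip} - v_{(i+1)(p+1)}). Then every row of (u_{ij}) sums to 1: Σ_{j=1}^n u_{ij} = 1 for each 1 ≤ i ≤ n. Consequently (u_{ij}) is a magic unitary.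 -/
/-!
Write `S(r, q) = ∑_{l < r} v_{lq}` (for a classical increasing sequence `x`, the indicator of
`x_q < r`). Then `u_{(m+p)(k+m)} = S(m+p, p) - S(m+p+1, p+1)`. In a C⋆-algebra the entries of a
column are orthogonal projections, being projections summing to `1`, so every `S(r, q)` is a
projection, and the increasing-sequence relations give `S(r+1, q+1) ≤ S(r, q)`; hence the new
entries are projections. A column sum telescopes to `S(m, 0) - S(m+k+1, k+1) = 1`, and a row sum
telescopes along the band `j ≤ i ≤ n - k + j` outside of which `v_{ij}` vanishes.
-/

open Finset

namespace IsStarProjection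

theorem sum {R ι : Type*} [NonUnitalNonAssocSemiring R] [StarRing R] {s : Finset ι}
    {p : ι → R} (hp : ∀ i ∈ s, IsStarProjection (p i))
    (horth : ∀ i ∈ s, ∀ j ∈ s, i ≠ j → p i * p j = 0) :
    IsStarProjection (∑ i ∈ s, p i) := by
  classical
  induction s using Finset.induction_on with
  | empty => simp
  | insert a s ha ih =>
    rw [sum_insert ha]
    refine (hp a (mem_insert_self a s)).add
      (ih (fun i hi => hp i (mem_insert_of_mem hi)) fun i hi j hj hij =>
        horth i (mem_insert_of_mem hi) j (mem_insert_of_mem hj) hij) ?_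
    rw [mul_sum]
    exact sum_eq_zero fun j hj => horth a (mem_insert_self a s) j (mem_insert_of_mem hj)
      (ne_of_mem_of_not_mem hj ha).symm

theorem mul_eq_zero_of_sum_eq_one {A ι : Type*} [NormedRing A] [StarRing A] [CStarRing A]
    [PartialOrder A] [StarOrderedRing A] {s : Finset ι} {p : ι → A}
    (hp : ∀ i ∈ s, IsStarProjection (p i)) (hs : ∑ i ∈ s, p i = 1)
    {a b : ι} (ha : a ∈ s) (hb : b ∈ s) (hab : a ≠ b) : p a * p b = 0 := by
  classical
  have hsq : ∀ i ∈ s, star (p i * p a) * (p i * p a) = p a * p i * p a := fun i hi => by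
    rw [star_mul, (hp a ha).isSelfAdjoint.star_eq, (hp i hi).isSelfAdjoint.star_eq,
      mul_assoc, ← mul_assoc (p i), (hp i hi).isIdempotentElem.eq, mul_assoc]
  -- `p a = p a (∑ i, p i) p a`, and the terms with `i ≠ a` are positive.
  have hzero : ∑ i ∈ s.erase a, star (p i * p a) * (p i * p a) = 0 := by
    have h := congrArg (fun x => p a * x * p a) hs
    simp only [mul_sum, sum_mul, mul_one, (hp a ha).isIdempotentElem.eq] at h
    rw [← add_sum_erase s _ ha, (hp a ha).isIdempotentElem.eq,
      (hp a ha).isIdempotentElem.eq, add_eq_left] at h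
    rwa [sum_congr rfl fun i hi => hsq i (mem_of_mem_erase hi)]
  have hba : p b * p a = 0 := (CStarRing.star_mul_self_eq_zero_iff _).mp <|
    (sum_eq_zero_iff_of_nonneg fun i _ => star_mul_self_nonneg _).mp hzero b
      (mem_erase.mpr ⟨hab.symm, hb⟩)
  simpa [star_mul, (hp a ha).isSelfAdjoint.star_eq, (hp b hb).isSelfAdjoint.star_eq]
    using congrArg star hba

end IsStarProjection

structure IsQIncSeq {A : Type*} [Ring A] [Star A] (n k : ℕ) (v : ℕ → ℕ → A) : Prop where
  isStarProjection_of_pos : ∀ i j, 1 ≤ i → i ≤ n → 1 ≤ j → j ≤ k → IsStarProjection (v i j)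
  sum_Icc : ∀ j, 1 ≤ j → j ≤ k → ∑ i ∈ Icc 1 n, v i j = 1
  mul_eq_zero_of_pos : ∀ i i' j j', 1 ≤ i' → i ≤ n → 1 ≤ j → j' ≤ k → j < j' → i' ≤ i →
    v i j * v i' j' = 0
  zero_zero : v 0 0 = 1
  col_zero_eq_zero : ∀ i, 1 ≤ i → v i 0 = 0
  row_zero_eq_zero : ∀ j, 1 ≤ j → v 0 j = 0
  col_last_eq_zero : ∀ i, 1 ≤ i → v i (k + 1) = 0

/-- For a classical increasing sequence `x` (`v i j = [x j = i]`), `colSum v r q = [x q < r]`. -/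
def colSum {A : Type*} [AddCommMonoid A] (v : ℕ → ℕ → A) (r q : ℕ) : A := ∑ l ∈ range r, v l q

namespace IsQIncSeq

section Ring

variable {A : Type*} [Ring A] [StarRing A] {n k : ℕ} {v : ℕ → ℕ → A} {i i' j j' r q : ℕ}

theorem apply_last (hv : IsQIncSeq n k v) (i : ℕ) : v i (k + 1) = 0 := by
  rcases Nat.eq_zero_or_pos i with rfl | hi
  · exact hv.row_zero_eq_zero _ (Nat.le_add_left 1 k)
  · exact hv.col_last_eq_zero i hi

theorem isStarProjection (hv : IsQIncSeq n k v) (hi : i ≤ n) (hj : j ≤ k + 1) :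
    IsStarProjection (v i j) := by
  rcases Nat.eq_zero_or_pos j with rfl | hj0
  · rcases Nat.eq_zero_or_pos i with rfl | hi0
    · simp [hv.zero_zero]
    · simp [hv.col_zero_eq_zero i hi0]
  rcases Nat.eq_zero_or_pos i with rfl | hi0
  · simp [hv.row_zero_eq_zero j hj0]
  rcases hj.lt_or_eq with hjk | rfl
  · exact hv.isStarProjection_of_pos i j hi0 hi hj0 (by omega)
  · simp [hv.apply_last]

theorem sum_range (hv : IsQIncSeq n k v) (hj : j ≤ k) : ∑ i ∈ range (n + 1), v i j = 1 := by
  rcases Nat.eq_zero_or_pos j with rfl | hj0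
  · rw [sum_eq_single_of_mem 0 (by simp) fun i _ hi => hv.col_zero_eq_zero i (by omega)]
    exact hv.zero_zero
  · rw [sum_range_succ', hv.row_zero_eq_zero j hj0, add_zero, ← hv.sum_Icc j hj0 hj,
      range_eq_Ico, sum_Ico_add' (fun l => v l j), Ico_add_one_right_eq_Icc, zero_add]

theorem mul_eq_zero_of_lt (hv : IsQIncSeq n k v) (hi : i ≤ n) (hj' : j' ≤ k + 1) (hjj' : j < j')
    (hi'i : i' ≤ i) : v i j * v i' j' = 0 := by
  rcases Nat.eq_zero_or_pos i' with rfl | hi'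
  · rw [hv.row_zero_eq_zero j' (by omega), mul_zero]
  rcases Nat.eq_zero_or_pos j with rfl | hj
  · rw [hv.col_zero_eq_zero i (by omega), zero_mul]
  rcases hj'.lt_or_eq with hj'k | rfl
  · exact hv.mul_eq_zero_of_pos i i' j j' hi' hi hj (by omega) hjj' hi'i
  · rw [hv.apply_last, mul_zero]

theorem mul_eq_zero_of_lt' (hv : IsQIncSeq n k v) (hi : i ≤ n) (hj' : j' ≤ k + 1)
    (hjj' : j < j') (hi'i : i' ≤ i) : v i' j' * v i j = 0 := by
  have h := congrArg star (hv.mul_eq_zero_of_lt hi hj' hjj' hi'i)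
  rwa [star_mul, (hv.isStarProjection (hi'i.trans hi) hj').isSelfAdjoint.star_eq,
    (hv.isStarProjection hi (by omega)).isSelfAdjoint.star_eq, star_zero] at h

theorem eq_zero_of_lt (hv : IsQIncSeq n k v) (hj : j ≤ k) (hij : i < j) : v i j = 0 := by
  induction j generalizing i with
  | zero => omega
  | succ j ih =>
    rw [← one_mul (v i (j + 1)), ← hv.sum_range (j := j) (by omega), sum_mul]
    refine sum_eq_zero fun l hl => ?_
    rcases le_or_gt i l with hil | hli
    · exact hv.mul_eq_zero_of_lt (Nat.lt_succ_iff.mp (mem_range.mp hl)) (by omega) (lt_add_one j)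
        hil
    · rw [ih (by omega) (by omega), zero_mul]

theorem eq_zero_of_sub_add_lt (hv : IsQIncSeq n k v) (hi : i ≤ n) (hj : j ≤ k)
    (h : n - k + j < i) : v i j = 0 := by
  obtain ⟨d, hd⟩ := Nat.exists_eq_add_of_le hj
  induction d generalizing i j with
  | zero => omega
  | succ d ih =>
    rw [← mul_one (v i j), ← hv.sum_range (j := j + 1) (by omega), mul_sum]
    refine sum_eq_zero fun l hl => ?_
    have hl := Nat.lt_succ_iff.mp (mem_range.mp hl)
    rcases le_or_gt l i with hli | hil
    · exact hv.mul_eq_zero_of_lt hi (by omega) (lt_add_one j) hli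
    · rw [ih hl (by omega) (by omega) (by omega), mul_zero]

theorem sum_range_sub_eq_colSum_sub (hv : IsQIncSeq n k v) (r p : ℕ) :
    ∑ i ∈ range r, (v i p - v (i + 1) (p + 1)) = colSum v r p - colSum v (r + 1) (p + 1) := by
  rw [sum_sub_distrib, colSum, colSum, sum_range_succ' _ r,
    hv.row_zero_eq_zero (p + 1) (Nat.le_add_left 1 p), add_zero]

theorem colSum_zero (hv : IsQIncSeq n k v) (hr : 1 ≤ r) : colSum v r 0 = 1 := by
  rw [colSum, sum_eq_single_of_mem 0 (by simp; omega) fun i _ hi =>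
    hv.col_zero_eq_zero i (by omega)]
  exact hv.zero_zero

theorem colSum_last (hv : IsQIncSeq n k v) (r : ℕ) : colSum v r (k + 1) = 0 :=
  sum_eq_zero fun i _ => hv.apply_last i

theorem colSum_eq_zero_of_le (hv : IsQIncSeq n k v) (hrq : r ≤ q) (hq : q ≤ k + 1) :
    colSum v r q = 0 := by
  rcases hq.lt_or_eq with hqk | rfl
  · exact sum_eq_zero fun i hi => hv.eq_zero_of_lt (by omega) ((mem_range.mp hi).trans_le hrq)
  · exact hv.colSum_last r

theorem colSum_eq_one_sub (hv : IsQIncSeq n k v) (hi : i ≤ n) (hj : j ≤ k) (h : n - k + j ≤ i) :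
    colSum v i j = 1 - v i j := by
  have hsplit := sum_range_add_sum_Ico (fun l => v l j) (show i ≤ n + 1 by omega)
  rw [hv.sum_range hj, sum_eq_single_of_mem i (mem_Ico.mpr ⟨le_rfl, by omega⟩) fun l hl hli =>
    hv.eq_zero_of_sub_add_lt (by simp at hl; omega) hj (by simp at hl; omega)] at hsplit
  exact eq_sub_of_add_eq hsplit

theorem sum_row_eq_sum_range (hv : IsQIncSeq n k v) (hi : 1 ≤ i) (hin : i ≤ n) {s : Finset ℕ}
    (hs : s ⊆ range (k + 2)) (hsupp : ∀ j, 1 ≤ j → j ≤ k → j ≤ i → i ≤ n - k + j → j ∈ s) :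
    ∑ j ∈ s, v i j = ∑ j ∈ range (k + 2), v i j := by
  refine sum_subset hs fun j hj hjs => ?_
  have hj := mem_range.mp hj
  rcases Nat.eq_zero_or_pos j with rfl | hj0
  · exact hv.col_zero_eq_zero i hi
  rcases lt_or_ge k j with hkj | hjk
  · rw [show j = k + 1 by omega, hv.apply_last]
  rcases lt_or_ge i j with hij | hji
  · exact hv.eq_zero_of_lt hjk hij
  · exact hv.eq_zero_of_sub_add_lt hin hjk
      (by_contra fun h => hjs (hsupp j hj0 hjk hji (by omega)))

theorem sum_Ico_colSum_sub (hv : IsQIncSeq n k v) (hi : 1 ≤ i) (hin : i ≤ n) :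
    ∑ q ∈ Ico (i - (n - k)) (min (k + 1) i), (colSum v i q - colSum v (i + 1) (q + 1)) =
      1 - ∑ j ∈ range (k + 2), v i j := by
  set a := i - (n - k)
  set c := min (k + 1) i
  have hac : a ≤ c := by omega
  have hfirst : colSum v i a = 1 - v i a := by
    rcases le_or_gt i (n - k) with h | h
    · rw [show a = 0 by omega, hv.colSum_zero hi, hv.col_zero_eq_zero i hi, sub_zero]
    · exact hv.colSum_eq_one_sub hin (by omega) (by omega)
  have hlast : colSum v i c = 0 := by
    rcases le_total i (k + 1) with h | h
    · rw [show c = i from min_eq_right h]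
      exact hv.colSum_eq_zero_of_le le_rfl h
    · rw [show c = k + 1 from min_eq_left h]
      exact hv.colSum_last i
  have htel : ∑ q ∈ Ico a c, (colSum v i q - colSum v i (q + 1)) = colSum v i a - colSum v i c := by
    rw [← neg_sub (colSum v i c), ← sum_Ico_sub _ hac, ← sum_neg_distrib]
    simp only [neg_sub]
  have hrow : ∑ j ∈ Ico a (c + 1), v i j = ∑ j ∈ range (k + 2), v i j :=
    hv.sum_row_eq_sum_range hi hin (fun j hj => by simp only [mem_Ico, mem_range] at hj ⊢; omega)
      fun j _ hjk hji hij => by simp only [mem_Ico]; omega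
  calc ∑ q ∈ Ico a c, (colSum v i q - colSum v (i + 1) (q + 1))
      = ∑ q ∈ Ico a c, (colSum v i q - colSum v i (q + 1)) - ∑ q ∈ Ico a c, v i (q + 1) := by
        simp only [colSum, sum_range_succ, sub_add_eq_sub_sub, sum_sub_distrib]
    _ = 1 - (v i a + ∑ j ∈ Ico (a + 1) (c + 1), v i j) := by
        rw [htel, hfirst, hlast, sum_Ico_add' (fun j => v i j)]
        abel
    _ = 1 - ∑ j ∈ range (k + 2), v i j := by
        rw [← sum_eq_sum_Ico_succ_bot (by omega), hrow]

/-- `[x (q + 1) ≤ r]` implies `[x q < r]`. -/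
theorem colSum_succ_mul (hv : IsQIncSeq n k v) (hr : r ≤ n) (hq : q ≤ k) :
    colSum v (r + 1) (q + 1) * colSum v r q = colSum v (r + 1) (q + 1) := by
  rw [colSum, sum_mul]
  refine sum_congr rfl fun l hl => ?_
  have hlr := Nat.lt_succ_iff.mp (mem_range.mp hl)
  have htail : v l (q + 1) * ∑ l' ∈ Ico r (n + 1), v l' q = 0 := by
    rw [mul_sum]
    refine sum_eq_zero fun l' hl' => ?_
    simp only [mem_Ico] at hl'
    exact hv.mul_eq_zero_of_lt' (by omega) (by omega) (lt_add_one q) (by omega)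
  rw [← add_zero (v l (q + 1) * _), ← htail, ← mul_add, colSum,
    sum_range_add_sum_Ico _ (by omega), hv.sum_range hq, mul_one]

end Ring

section CStarAlgebra

variable {A : Type*} [CStarAlgebra A] {n k : ℕ} {v : ℕ → ℕ → A} {i i' j r q : ℕ}

theorem mul_eq_zero_of_ne (hv : IsQIncSeq n k v) (hi : i ≤ n) (hi' : i' ≤ n) (hj : j ≤ k + 1)
    (hii' : i ≠ i') : v i j * v i' j = 0 := by
  rcases hj.lt_or_eq with hjk | rfl
  · let _ := CStarAlgebra.spectralOrder A
    have _ := CStarAlgebra.spectralOrderedRing A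
    exact IsStarProjection.mul_eq_zero_of_sum_eq_one
      (fun l hl => hv.isStarProjection (Nat.lt_succ_iff.mp (mem_range.mp hl)) hj)
      (hv.sum_range (by omega)) (by simp; omega) (by simp; omega) hii'
  · rw [hv.apply_last, zero_mul]

theorem colSum_isStarProjection (hv : IsQIncSeq n k v) (hr : r ≤ n + 1) (hq : q ≤ k + 1) :
    IsStarProjection (colSum v r q) :=
  .sum (fun l hl => hv.isStarProjection (by simp at hl; omega) hq)
    fun l hl l' hl' hll' =>
      hv.mul_eq_zero_of_ne (by simp at hl; omega) (by simp at hl'; omega) hq hll'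

end CStarAlgebra

end IsQIncSeq

structure IsQIncSeqExtension {A : Type*} [Ring A] (n k : ℕ) (v u : ℕ → ℕ → A) : Prop where
  apply_of_le : ∀ i j, 1 ≤ i → i ≤ n → 1 ≤ j → j ≤ k → u i j = v i j
  apply_add_eq_zero : ∀ i m, 1 ≤ i → i ≤ n → 1 ≤ m → m ≤ n - k → (i < m ∨ m + k < i) →
    u i (k + m) = 0
  apply_add_add : ∀ m p, 1 ≤ m → m ≤ n - k → p ≤ k →
    u (m + p) (k + m) = ∑ i ∈ range (m + p), (v i p - v (i + 1) (p + 1))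

namespace IsQIncSeqExtension

section Ring

variable {A : Type*} [Ring A] {n k : ℕ} {v u : ℕ → ℕ → A} {i j : ℕ}

theorem apply_eq_zero (hu : IsQIncSeqExtension n k v u) (hi : 1 ≤ i) (hin : i ≤ n) (hkj : k < j)
    (hjn : j ≤ n) (h : j < i ∨ i + k < j) : u i j = 0 := by
  have hm := hu.apply_add_eq_zero i (j - k) hi hin (by omega) (by omega) (by omega)
  rwa [show k + (j - k) = j by omega] at hm

theorem apply_eq_colSum_sub [StarRing A] (hv : IsQIncSeq n k v) (hu : IsQIncSeqExtension n k v u)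
    (hkj : k < j) (hjn : j ≤ n) (hij : i ≤ j) (hji : j ≤ i + k) :
    u i j = colSum v i (i + k - j) - colSum v (i + 1) (i + k - j + 1) := by
  have h := hu.apply_add_add (j - k) (i + k - j) (by omega) (by omega) (by omega)
  rwa [show j - k + (i + k - j) = i by omega, show k + (j - k) = j by omega,
    hv.sum_range_sub_eq_colSum_sub] at h

theorem sum_col [StarRing A] (hv : IsQIncSeq n k v) (hu : IsQIncSeqExtension n k v u) (hj : 1 ≤ j)
    (hjn : j ≤ n) : ∑ i ∈ Icc 1 n, u i j = 1 := by
  rcases le_or_gt j k with hjk | hkj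
  · rw [sum_congr rfl fun i hi => hu.apply_of_le i j (mem_Icc.mp hi).1 (mem_Icc.mp hi).2 hj hjk]
    exact hv.sum_Icc j hj hjk
  have hband : ∑ i ∈ Icc 1 n, u i j = ∑ i ∈ Icc (j - k) j, u i j := by
    refine (sum_subset (Icc_subset_Icc (by omega) hjn) fun i hi hi' => ?_).symm
    simp only [mem_Icc] at hi hi'
    exact hu.apply_eq_zero hi.1 hi.2 hkj hjn (by omega)
  have hentry : ∀ p ∈ range (k + 1), u (j - k + p) j =
      colSum v (j - k + p) p - colSum v (j - k + (p + 1)) (p + 1) := fun p hp => by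
    rw [hu.apply_eq_colSum_sub hv hkj hjn (by simp at hp; omega) (by omega)]
    congr 2 <;> omega
  rw [hband, ← Ico_add_one_right_eq_Icc, sum_Ico_eq_sum_range,
    show j + 1 - (j - k) = k + 1 by omega, sum_congr rfl hentry,
    sum_range_sub' (fun p => colSum v (j - k + p) p), hv.colSum_zero (by omega), hv.colSum_last,
    sub_zero]

theorem sum_Ioc_eq_sum_Ico [StarRing A] (hv : IsQIncSeq n k v) (hu : IsQIncSeqExtension n k v u)
    (hi : 1 ≤ i) (hin : i ≤ n) :
    ∑ j ∈ Ioc k n, u i j =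
      ∑ q ∈ Ico (i - (n - k)) (min (k + 1) i), (colSum v i q - colSum v (i + 1) (q + 1)) := by
  rw [← sum_filter_of_ne (p := fun j => i ≤ j ∧ j ≤ i + k) fun j hj hne => ?_]
  · refine sum_nbij' (fun j => i + k - j) (fun q => i + k - q) ?_ ?_ ?_ ?_ fun j hj => ?_
    all_goals simp only [mem_filter, mem_Ioc, mem_Ico] at *
    any_goals omega
    exact hu.apply_eq_colSum_sub hv hj.1.1 hj.1.2 hj.2.1 hj.2.2
  · simp only [mem_Ioc] at hj
    by_contra h
    exact hne (hu.apply_eq_zero hi hin hj.1 hj.2 (by omega))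

theorem sum_row [StarRing A] (hkn : k ≤ n) (hv : IsQIncSeq n k v)
    (hu : IsQIncSeqExtension n k v u) (hi : 1 ≤ i) (hin : i ≤ n) : ∑ j ∈ Icc 1 n, u i j = 1 := by
  have hold : ∑ j ∈ Ioc 0 k, u i j = ∑ j ∈ range (k + 2), v i j := by
    rw [sum_congr rfl fun j hj => hu.apply_of_le i j hi hin (mem_Ioc.mp hj).1 (mem_Ioc.mp hj).2]
    exact hv.sum_row_eq_sum_range hi hin
      (fun j hj => by simp only [mem_Ioc, mem_range] at hj ⊢; omega)
      fun j hj hjk _ _ => mem_Ioc.mpr ⟨hj, hjk⟩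
  rw [show Icc 1 n = Ioc 0 n from Icc_add_one_left_eq_Ioc 0 n,
    ← sum_Ioc_consecutive _ (Nat.zero_le k) hkn, hold, hu.sum_Ioc_eq_sum_Ico hv hi hin,
    hv.sum_Ico_colSum_sub hi hin, add_sub_cancel]

end Ring

theorem isStarProjection {A : Type*} [CStarAlgebra A] {n k : ℕ} {v u : ℕ → ℕ → A} {i j : ℕ}
    (hv : IsQIncSeq n k v) (hu : IsQIncSeqExtension n k v u) (hi : 1 ≤ i) (hin : i ≤ n)
    (hj : 1 ≤ j) (hjn : j ≤ n) : IsStarProjection (u i j) := by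
  rcases le_or_gt j k with hjk | hkj
  · rw [hu.apply_of_le i j hi hin hj hjk]
    exact hv.isStarProjection hin (by omega)
  by_cases hband : i ≤ j ∧ j ≤ i + k
  · rw [hu.apply_eq_colSum_sub hv hkj hjn hband.1 hband.2]
    exact (hv.colSum_isStarProjection (by omega) (by omega)).sub_of_mul_eq_left
      (hv.colSum_isStarProjection (by omega) (by omega)) (hv.colSum_succ_mul hin (by omega))
  · rw [hu.apply_eq_zero hi hin hkj hjn (by omega)]
    exact .zero A

end IsQIncSeqExtension

/-- Extension of quantum increasing sequences to quantum permutations (statement 9). -/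
theorem stmt_9 {A : Type*} [NormedRing A] [StarRing A] [CStarRing A]
    [CompleteSpace A] [NormedAlgebra ℂ A] [StarModule ℂ A]
    (n k : ℕ) (hkn : k < n) (v : ℕ → ℕ → A)
    (hproj : ∀ i j, 1 ≤ i → i ≤ n → 1 ≤ j → j ≤ k →
      star (v i j) = v i j ∧ v i j * v i j = v i j)
    (hcol : ∀ j, 1 ≤ j → j ≤ k → ∑ i ∈ Finset.Icc 1 n, v i j = 1)
    (hinc : ∀ i i' j j', 1 ≤ i → i ≤ n → 1 ≤ i' → i' ≤ n → 1 ≤ j → j ≤ k →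
      1 ≤ j' → j' ≤ k → j < j' → i' ≤ i → v i j * v i' j' = 0)
    (hv00 : v 0 0 = 1)
    (hconv : ∀ i, 1 ≤ i → v i 0 = 0 ∧ v 0 i = 0 ∧ v i (k + 1) = 0)
    (u : ℕ → ℕ → A)
    (hu1 : ∀ i j, 1 ≤ i → i ≤ n → 1 ≤ j → j ≤ k → u i j = v i j)
    (hu2 : ∀ i m, 1 ≤ i → i ≤ n → 1 ≤ m → m ≤ n - k → (i < m ∨ m + k < i) →
      u i (k + m) = 0)
    (hu3 : ∀ m p, 1 ≤ m → m ≤ n - k → p ≤ k →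
      u (m + p) (k + m) = ∑ i ∈ Finset.range (m + p), (v i p - v (i + 1) (p + 1))) :
    (∀ i, 1 ≤ i → i ≤ n → ∑ j ∈ Finset.Icc 1 n, u i j = 1) ∧
    (∀ i j, 1 ≤ i → i ≤ n → 1 ≤ j → j ≤ n →
      star (u i j) = u i j ∧ u i j * u i j = u i j) ∧
    (∀ j, 1 ≤ j → j ≤ n → ∑ i ∈ Finset.Icc 1 n, u i j = 1) := by
  let _ : CStarAlgebra A := { }
  have hv : IsQIncSeq n k v :=
    { isStarProjection_of_pos := fun i j hi hin hj hjk =>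
        ⟨(hproj i j hi hin hj hjk).2, (hproj i j hi hin hj hjk).1⟩
      sum_Icc := hcol
      mul_eq_zero_of_pos := fun i i' j j' hi' hin hj hj'k hjj' hi'i =>
        hinc i i' j j' (by omega) hin hi' (by omega) hj (by omega) (by omega) hj'k hjj' hi'i
      zero_zero := hv00
      col_zero_eq_zero := fun i hi => (hconv i hi).1
      row_zero_eq_zero := fun j hj => (hconv j hj).2.1
      col_last_eq_zero := fun i hi => (hconv i hi).2.2 }
  have hu : IsQIncSeqExtension n k v u := ⟨hu1, hu2, hu3⟩
  refine ⟨fun i hi hin => hu.sum_row hkn.le hv hi hin, fun i j hi hin hj hjn => ?_,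
    fun j hj hjn => hu.sum_col hv hj hjn⟩
  have h := hu.isStarProjection hv hi hin hj hjn
  exact ⟨h.isSelfAdjoint.star_eq, h.isIdempotentElem.eq⟩
end

section
/- Let (u_{ij})_{1 ≤ i,j ≤ n} be a magic unitary in a unital C*-algebra A, let k ≤ n, let π be a non-crossing partition of {1,…,k}, and let j_1,…,j_k ∈ {1,…,n}. Then Σ over all (i_1,…,i_k) ∈ {1,…,n}^k with π ≤ ker i of u_{i_1 j_1} ⋯ u_{i_k j_k} equals 1 if π ≤ ker j, and equals 0 otherwise. -/
/-!
A non-crossing partition of `{1,…,k+1}` has a singleton block or two neighbours `s, s+1` in the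
same block. Summing out the index at a singleton block uses that column sums are `1`. At
neighbours the two row indices agree, and `u i a * u i b = δ a b • u i a` because the entries of
a row are pairwise orthogonal projections. Either way one point is deleted, and induction on `k`
finishes the proof.
-/

open Finset Function

/-- `∑ i, (p i * p a)⋆ (p i * p a) = p a`, whose `i = a` term is already `p a`, so each other
term vanishes by positivity. -/
theorem IsStarProjection.mul_eq_zero_of_sum_eq_one_s11 {A ι : Type*} [NormedRing A] [StarRing A]
    [CStarRing A] [PartialOrder A] [StarOrderedRing A] [Fintype ι] {p : ι → A}
    (hp : ∀ i, IsStarProjection (p i)) (hsum : ∑ i, p i = 1) {a b : ι} (hab : a ≠ b) :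
    p a * p b = 0 := by
  classical
  have hterm : ∀ i, p a * p i * p a = star (p i * p a) * (p i * p a) := fun i => by
    rw [star_mul, (hp i).isSelfAdjoint.star_eq, (hp a).isSelfAdjoint.star_eq, ← mul_assoc,
      mul_assoc (p a) (p i) (p i), (hp i).isIdempotentElem.eq]
  have htotal : ∑ i, p a * p i * p a = p a + 0 := by
    rw [← sum_mul, ← mul_sum, hsum, mul_one, (hp a).isIdempotentElem.eq,
      add_zero]
  rw [← add_sum_erase _ _ (mem_univ a), (hp a).isIdempotentElem.eq,
    (hp a).isIdempotentElem.eq, add_right_inj] at htotal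
  have hba : star (p b * p a) * (p b * p a) = 0 := by
    rw [← hterm]
    refine (sum_eq_zero_iff_of_nonneg fun i _ => ?_).mp htotal b
      (mem_erase.mpr ⟨hab.symm, mem_univ b⟩)
    rw [hterm]
    exact star_mul_self_nonneg _
  rw [CStarRing.star_mul_self_eq_zero_iff] at hba
  simpa [star_mul, (hp a).isSelfAdjoint.star_eq, (hp b).isSelfAdjoint.star_eq] using
    congrArg star hba

theorem List.prod_ofFn_insertNth {M : Type*} [Monoid M] {k : ℕ} (g : Fin k → M)
    (p : Fin (k + 1)) (x : M) :
    (List.ofFn (p.insertNth x g)).prod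
      = ((List.ofFn g).take p).prod * x * ((List.ofFn g).drop p).prod := by
  induction g using Fin.consInduction with
  | elim0 => simp [Fin.fin_one_eq_zero p, Fin.insertNth_zero']
  | cons a g ih =>
    cases p using Fin.cases with
    | zero => simp [Fin.insertNth_zero']
    | succ i =>
      rw [Fin.insertNth_succ_cons, List.ofFn_cons, List.ofFn_cons, List.prod_cons, ih]
      simp [mul_assoc]

theorem Fin.sum_pi_eq_sum_insertNth {β M : Type*} [Fintype β] [AddCommMonoid M] {k : ℕ}
    (p : Fin (k + 1)) (F : (Fin (k + 1) → β) → M) :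
    ∑ i, F i = ∑ g : Fin k → β, ∑ x, F (p.insertNth x g) := by
  rw [← (Fin.insertNthEquiv (fun _ => β) p).sum_comp, Fintype.sum_prod_type, sum_comm]
  rfl

def NonCrossing {α : Type*} [Preorder α] (R : α → α → Prop) : Prop :=
  ¬ ∃ s₁ t₁ s₂ t₂ : α, s₁ < t₁ ∧ t₁ < s₂ ∧ s₂ < t₂ ∧ R s₁ s₂ ∧ R t₁ t₂ ∧ ¬ R s₁ t₁

theorem NonCrossing.comap {α β : Type*} [Preorder α] [Preorder β] {R : α → α → Prop}
    (hR : NonCrossing R) {f : β → α} (hf : StrictMono f) : NonCrossing (R on f) :=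
  fun ⟨s₁, t₁, s₂, t₂, h₁, h₂, h₃, hs, ht, hst⟩ =>
    hR ⟨f s₁, f t₁, f s₂, f t₂, hf h₁, hf h₂, hf h₃, hs, ht, hst⟩

theorem NonCrossing.exists_singleton_or_adjacent {k : ℕ} {R : Fin (k + 1) → Fin (k + 1) → Prop}
    (hR : Equivalence R) (hnc : NonCrossing R) :
    (∃ p, ∀ t, R p t → t = p) ∨ ∃ s : Fin k, R s.castSucc s.succ := by
  classical
  by_contra! h
  obtain ⟨hpartner, hgap⟩ := h
  -- Take related `a < b` at minimal distance. The partner `d` of `a + 1` yields a crossing with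
  -- `a, b`, or a closer pair.
  let pairs := univ.filter fun x : Fin (k + 1) × Fin (k + 1) => x.1 < x.2 ∧ R x.1 x.2
  have hpairs : pairs.Nonempty := by
    obtain ⟨t, h0t, ht⟩ := hpartner 0
    exact ⟨(0, t), by simpa [pairs] using ⟨Fin.pos_iff_ne_zero.mpr ht, h0t⟩⟩
  obtain ⟨⟨a, b⟩, hab, hmin⟩ := pairs.exists_min_image (fun x => (x.2 : ℕ) - x.1) hpairs
  simp only [pairs, mem_filter, mem_univ, true_and] at hab hmin
  obtain ⟨hab, hRab⟩ := hab
  let c : Fin k := ⟨a, by omega⟩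
  have hac : ¬ R a c.succ := hgap c
  have hc : (c.succ : ℕ) = a + 1 := rfl
  have hbc : (b : ℕ) ≠ a + 1 := fun h => hac (Fin.ext (h.trans hc.symm) ▸ hRab)
  obtain ⟨d, hcd, hdc⟩ := hpartner c.succ
  have hda : d ≠ a := fun h => hac (h ▸ hR.symm hcd)
  have hdb : d ≠ b := fun h => hac (hR.trans hRab (h ▸ hR.symm hcd))
  simp only [ne_eq, Fin.ext_iff, Fin.lt_def, hc] at hda hdb hdc hab hmin
  rcases lt_or_gt_of_ne hdc with hd | hd
  · refine hnc ⟨d, a, c.succ, b, ?_, ?_, ?_, hR.symm hcd, hRab,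
      fun hRda => hac (hR.trans (hR.symm hRda) (hR.symm hcd))⟩ <;>
    simp only [Fin.lt_def, hc] <;> omega
  · rcases lt_or_gt_of_ne hdb with hd' | hd'
    · have := hmin (c.succ, d) ⟨by simpa only [Fin.lt_def, hc] using hd, hcd⟩
      simp only [hc] at this
      omega
    · refine hnc ⟨a, c.succ, b, d, ?_, ?_, Fin.lt_def.2 hd', hRab, hcd, hac⟩ <;>
      simp only [Fin.lt_def, hc] <;> omega

/-- `π ≤ ker f`, for `π` the partition into classes of `R`. An `abbrev`, so that `if LeKer R f`
picks up the decidability instance of the unfolded formula. -/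
abbrev LeKer {α β : Type*} (R : α → α → Prop) (f : α → β) : Prop :=
  ∀ s t, R s t → f s = f t

section LeKer

variable {β : Type*} {k : ℕ} {R : Fin (k + 1) → Fin (k + 1) → Prop}

theorem leKer_insertNth_iff (hR : Std.Symm R) (p : Fin (k + 1)) (x : β) (g : Fin k → β) :
    LeKer R (p.insertNth x g)
      ↔ LeKer (R on p.succAbove) g ∧ ∀ a, R p (p.succAbove a) → g a = x := by
  refine ⟨fun h => ⟨fun a b hab => ?_, fun a ha => ?_⟩, fun ⟨hg, hx⟩ s t hst => ?_⟩
  · simpa using h _ _ hab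
  · simpa using (h _ _ ha).symm
  · cases s using p.succAboveCases <;> cases t using p.succAboveCases <;>
      simp only [Fin.insertNth_apply_same, Fin.insertNth_apply_succAbove]
    · exact (hx _ hst).symm
    · exact hx _ (hR.symm _ _ hst)
    · exact hg _ _ hst

theorem leKer_insertNth_iff_of_forall_rel_eq (hR : Std.Symm R) {p : Fin (k + 1)}
    (hp : ∀ t, R p t → t = p) (x : β) (g : Fin k → β) :
    LeKer R (p.insertNth x g) ↔ LeKer (R on p.succAbove) g := by
  rw [leKer_insertNth_iff hR]
  exact and_iff_left fun a ha => absurd (hp _ ha) (p.succAbove_ne a)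

theorem leKer_insertNth_iff_of_rel (hR : Equivalence R) {p : Fin (k + 1)} {s : Fin k}
    (hs : R p (p.succAbove s)) (x : β) (g : Fin k → β) :
    LeKer R (p.insertNth x g) ↔ LeKer (R on p.succAbove) g ∧ g s = x := by
  rw [leKer_insertNth_iff hR.stdSymm]
  exact and_congr_right fun hg =>
    ⟨fun hx => hx s hs, fun hx a ha => (hg _ _ (hR.trans (hR.symm ha) hs)).trans hx⟩

end LeKer

section KerSum

variable {A : Type*} [Semiring A] {n : ℕ} (u : Fin n → Fin n → A)

def entries {k : ℕ} (i j : Fin k → Fin n) : List A :=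
  List.ofFn fun s => u (i s) (j s)

open Classical in
noncomputable def kerSum {k : ℕ} (R : Fin k → Fin k → Prop) (j : Fin k → Fin n) : A :=
  ∑ i, if LeKer R i then (entries u i j).prod else 0

variable {u} {k : ℕ}

theorem prod_entries_insertNth (p : Fin (k + 1)) (x : Fin n) (g : Fin k → Fin n)
    (j : Fin (k + 1) → Fin n) :
    (entries u (p.insertNth x g) j).prod
      = ((entries u g (p.removeNth j)).take p).prod * u x (j p)
          * ((entries u g (p.removeNth j)).drop p).prod := by
  have hword : entries u (p.insertNth x g) j
      = List.ofFn (p.insertNth (u x (j p)) fun a => u (g a) (p.removeNth j a)) := by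
    refine congrArg List.ofFn (funext fun s => ?_)
    cases s using p.succAboveCases <;> simp [Fin.removeNth]
  rw [hword, List.prod_ofFn_insertNth]
  rfl

theorem kerSum_of_forall_rel_eq (hcol : ∀ b, ∑ a, u a b = 1)
    {R : Fin (k + 1) → Fin (k + 1) → Prop} (hR : Std.Symm R) {p : Fin (k + 1)}
    (hp : ∀ t, R p t → t = p) (j : Fin (k + 1) → Fin n) :
    kerSum u R j = kerSum u (R on p.succAbove) (p.removeNth j) := by
  classical
  rw [kerSum, Fin.sum_pi_eq_sum_insertNth p, kerSum]
  refine sum_congr rfl fun g _ => ?_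
  simp only [leKer_insertNth_iff_of_forall_rel_eq hR hp, prod_entries_insertNth, sum_ite_irrel,
    sum_const_zero]
  rw [← sum_mul, ← mul_sum, hcol, mul_one, List.prod_take_mul_prod_drop]

theorem kerSum_of_rel_castSucc_succ (hidem : ∀ a b, IsIdempotentElem (u a b))
    (hortho : ∀ a b c, b ≠ c → u a b * u a c = 0)
    {R : Fin (k + 1) → Fin (k + 1) → Prop} (hR : Equivalence R) {s : Fin k}
    (hs : R s.castSucc s.succ) (j : Fin (k + 1) → Fin n) :
    kerSum u R j
      = if j s.castSucc = j s.succ then kerSum u (R on s.succ.succAbove) (s.succ.removeNth j)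
        else 0 := by
  have hs' : R s.succ (s.succ.succAbove s) := by simpa using hR.symm hs
  classical
  set w := fun g : Fin k → Fin n => entries u g (s.succ.removeNth j)
  have hw : ∀ g, (w g).prod
      = ((w g).take s).prod * u (g s) (j s.castSucc) * ((w g).drop (s + 1)).prod := fun g => by
    rw [← List.prod_take_mul_prod_drop (w g) (s + 1),
      List.prod_take_succ _ _ (by simp [w, entries])]
    simp [w, entries, Fin.removeNth]
  have hinner : ∀ g, (∑ x, if LeKer R (s.succ.insertNth x g) then
        (entries u (s.succ.insertNth x g) j).prod else 0)
      = if LeKer (R on s.succ.succAbove) g then ((w g).take s).prod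
          * (u (g s) (j s.castSucc) * u (g s) (j s.succ)) * ((w g).drop (s + 1)).prod
        else 0 := fun g => by
    simp only [leKer_insertNth_iff_of_rel hR hs', ite_and, prod_entries_insertNth, sum_ite_irrel,
      sum_ite_eq, mem_univ, if_true, sum_const_zero]
    rw [Fin.val_succ, List.prod_take_succ _ _ (by simp [entries])]
    simp [w, entries, Fin.removeNth, mul_assoc]
  rw [kerSum, Fin.sum_pi_eq_sum_insertNth s.succ, kerSum]
  simp only [hinner]
  split_ifs with hj
  · simp only [← hj, (hidem _ _).eq, ← hw]
    rfl
  · simp [hortho _ _ _ hj]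

open Classical in
theorem kerSum_eq_ite_leKer (hcol : ∀ b, ∑ a, u a b = 1)
    (hidem : ∀ a b, IsIdempotentElem (u a b)) (hortho : ∀ a b c, b ≠ c → u a b * u a c = 0)
    {R : Fin k → Fin k → Prop} (hR : Equivalence R) (hnc : NonCrossing R) (j : Fin k → Fin n) :
    kerSum u R j = if LeKer R j then 1 else 0 := by
  induction k with
  | zero => simp [kerSum, entries]
  | succ k ih =>
    rcases hnc.exists_singleton_or_adjacent hR with ⟨p, hp⟩ | ⟨s, hs⟩
    · have hj := leKer_insertNth_iff_of_forall_rel_eq hR.stdSymm hp (j p) (p.removeNth j)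
      rw [Fin.insertNth_self_removeNth] at hj
      rw [kerSum_of_forall_rel_eq hcol hR.stdSymm hp,
        ih (hR.comap _) (hnc.comap (Fin.strictMono_succAbove p))]
      exact if_congr hj.symm rfl rfl
    · have hs' : R s.succ (s.succ.succAbove s) := by simpa using hR.symm hs
      have hj := leKer_insertNth_iff_of_rel hR hs' (j s.succ) (s.succ.removeNth j)
      rw [Fin.insertNth_self_removeNth, Fin.removeNth_apply, Fin.succAbove_succ_self] at hj
      rw [kerSum_of_rel_castSucc_succ hidem hortho hR hs,
        ih (hR.comap _) (hnc.comap (Fin.strictMono_succAbove s.succ))]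
      split_ifs <;> tauto

end KerSum

open Classical in
theorem stmt_11_general {A : Type*} [NormedRing A] [StarRing A] [CStarRing A]
    [CompleteSpace A] [NormedAlgebra ℂ A] [StarModule ℂ A]
    (n k : ℕ) (u : Fin n → Fin n → A)
    (hproj : ∀ i j, star (u i j) = u i j ∧ u i j * u i j = u i j)
    (hrow : ∀ i, ∑ j, u i j = 1)
    (hcolsum : ∀ j, ∑ i, u i j = 1)
    (R : Fin k → Fin k → Prop) (hR : Equivalence R)
    (hnc : ¬ ∃ s₁ t₁ s₂ t₂ : Fin k, s₁ < t₁ ∧ t₁ < s₂ ∧ s₂ < t₂ ∧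
      R s₁ s₂ ∧ R t₁ t₂ ∧ ¬ R s₁ t₁)
    (j : Fin k → Fin n) :
    ∑ i : Fin k → Fin n,
        (if ∀ s t, R s t → i s = i t
          then (List.ofFn (fun s : Fin k => u (i s) (j s))).prod else 0)
      = if ∀ s t, R s t → j s = j t then 1 else 0 := by
  have hu : ∀ a b, IsStarProjection (u a b) := fun a b => ⟨(hproj a b).2, (hproj a b).1⟩
  have hortho : ∀ a b c, b ≠ c → u a b * u a c = 0 := by
    let : CStarAlgebra A := {}
    let := CStarAlgebra.spectralOrder A
    have := CStarAlgebra.spectralOrderedRing A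
    exact fun a _ _ hbc => IsStarProjection.mul_eq_zero_of_sum_eq_one_s11 (hu a) (hrow a) hbc
  exact kerSum_eq_ite_leKer hcolsum (fun a b => (hu a b).isIdempotentElem) hortho hR hnc j

open Classical in
/-- For a magic unitary `u` in a unital C*-algebra, a non-crossing partition `π` of
`{1,…,k}` (given as an equivalence relation `R` on `Fin k`), and indices `j`, the sum of
the ordered products `u (i 1) (j 1) ⋯ u (i k) (j k)` over all tuples `i` with `π ≤ ker i`
equals `1` if `π ≤ ker j` and `0` otherwise. -/
theorem stmt_11 {A : Type*} [NormedRing A] [StarRing A] [CStarRing A]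
    [CompleteSpace A] [NormedAlgebra ℂ A] [StarModule ℂ A]
    (n k : ℕ) (hkn : k ≤ n) (u : Fin n → Fin n → A)
    (hproj : ∀ i j, star (u i j) = u i j ∧ u i j * u i j = u i j)
    (hrow : ∀ i, ∑ j, u i j = 1)
    (hcolsum : ∀ j, ∑ i, u i j = 1)
    (R : Fin k → Fin k → Prop) (hR : Equivalence R)
    (hnc : ¬ ∃ s₁ t₁ s₂ t₂ : Fin k, s₁ < t₁ ∧ t₁ < s₂ ∧ s₂ < t₂ ∧
      R s₁ s₂ ∧ R t₁ t₂ ∧ ¬ R s₁ t₁)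
    (j : Fin k → Fin n) :
    ∑ i : Fin k → Fin n,
        (if ∀ s t, R s t → i s = i t
          then (List.ofFn (fun s : Fin k => u (i s) (j s))).prod else 0)
      = if ∀ s t, R s t → j s = j t then 1 else 0 :=
  stmt_11_general n k u hproj hrow hcolsum R hR hnc j
end

section
/- Let u_{ij} (1 ≤ i ≤ n, 1 ≤ j ≤ n-1) satisfy the quantum increasing sequence relations in a unital C*-algebra (the case k = n-1). Then all the u_{ij} commute with one another. -/
/-- The quantum increasing sequence relations with `k = n - 1` force all the generators
to commute with one another. -/
theorem stmt_18 {A : Type*} [NormedRing A] [StarRing A] [CStarRing A]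
    [CompleteSpace A] [NormedAlgebra ℂ A] [StarModule ℂ A]
    (n : ℕ) (hn : 1 ≤ n) (u : ℕ → ℕ → A)
    (hproj : ∀ i j, 1 ≤ i → i ≤ n → 1 ≤ j → j ≤ n - 1 →
      star (u i j) = u i j ∧ u i j * u i j = u i j)
    (hcol : ∀ j, 1 ≤ j → j ≤ n - 1 → ∑ i ∈ Finset.Icc 1 n, u i j = 1)
    (hinc : ∀ i i' j j', 1 ≤ i → i ≤ n → 1 ≤ i' → i' ≤ n → 1 ≤ j → j ≤ n - 1 →
      1 ≤ j' → j' ≤ n - 1 → j < j' → i' ≤ i → u i j * u i' j' = 0) :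
    ∀ i i' j j', 1 ≤ i → i ≤ n → 1 ≤ i' → i' ≤ n → 1 ≤ j → j ≤ n - 1 →
      1 ≤ j' → j' ≤ n - 1 → u i j * u i' j' = u i' j' * u i j := by
  -- support lemma, part 1: entries above the diagonal vanish
  have hlow : ∀ j, j ≤ n - 1 → ∀ i, 1 ≤ i → i < j → u i j = 0 := by
    intro j
    induction j with
    | zero => intro _ i _ h; exact absurd h (Nat.not_lt_zero i)
    | succ j ih =>
      intro hj i hi hij
      have hj1 : 1 ≤ j := by omega
      calc u i (j+1) = (∑ i' ∈ Finset.Icc 1 n, u i' j) * u i (j+1) := by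
            rw [hcol j hj1 (by omega), one_mul]
        _ = ∑ i' ∈ Finset.Icc 1 n, u i' j * u i (j+1) := Finset.sum_mul _ _ _
        _ = 0 := by
            apply Finset.sum_eq_zero
            intro i' hi'
            simp only [Finset.mem_Icc] at hi'
            by_cases hc : i ≤ i'
            · exact hinc i' i j (j+1) hi'.1 hi'.2 hi (by omega) hj1 (by omega)
                (by omega) hj (by omega) hc
            · rw [ih (by omega) i' hi'.1 (by omega), zero_mul]
  -- support lemma, part 2: entries far below the diagonal vanish
  have hhigh : ∀ d j, n - 1 - j ≤ d → 1 ≤ j → j ≤ n - 1 → ∀ i, i ≤ n →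
      j + 1 < i → u i j = 0 := by
    intro d
    induction d with
    | zero => intro j hd hj1 hj2 i hin hji; exact absurd hji (by omega)
    | succ d ih =>
      intro j hd hj1 hj2 i hin hji
      by_cases hcase : j = n - 1
      · exact absurd hji (by omega)
      · calc u i j = u i j * ∑ i' ∈ Finset.Icc 1 n, u i' (j+1) := by
              rw [hcol (j+1) (by omega) (by omega), mul_one]
          _ = ∑ i' ∈ Finset.Icc 1 n, u i j * u i' (j+1) := Finset.mul_sum _ _ _
          _ = 0 := by
              apply Finset.sum_eq_zero
              intro i' hi'
              simp only [Finset.mem_Icc] at hi'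
              by_cases hc : i' ≤ i
              · exact hinc i i' j (j+1) (by omega) hin hi'.1 hi'.2 hj1 (by omega)
                  (by omega) (by omega) (by omega) hc
              · rw [ih (j+1) (by omega) (by omega) (by omega) i' hi'.2 (by omega),
                  mul_zero]
  -- the subdiagonal entry is the complement of the diagonal one
  have hq : ∀ j, 1 ≤ j → j ≤ n - 1 → u (j+1) j = 1 - u j j := by
    intro j hj1 hj2
    have hsub : ({j, j+1} : Finset ℕ) ⊆ Finset.Icc 1 n := by
      intro x hx
      simp only [Finset.mem_insert, Finset.mem_singleton] at hx
      simp only [Finset.mem_Icc]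
      omega
    have hz : ∀ i ∈ Finset.Icc 1 n, i ∉ ({j, j+1} : Finset ℕ) → u i j = 0 := by
      intro i hi hni
      simp only [Finset.mem_Icc] at hi
      simp only [Finset.mem_insert, Finset.mem_singleton] at hni
      push_neg at hni
      by_cases h : i < j
      · exact hlow j hj2 i hi.1 h
      · exact hhigh (n-1-j) j le_rfl hj1 hj2 i hi.2 (by omega)
    have hsum := (Finset.sum_subset hsub hz).trans (hcol j hj1 hj2)
    rw [Finset.sum_insert (by simp), Finset.sum_singleton] at hsum
    exact eq_sub_of_add_eq' hsum
  -- adjacent diagonal projections are nested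
  have hadj : ∀ j, 1 ≤ j → j + 1 ≤ n - 1 → u j j * u (j+1) (j+1) = u (j+1) (j+1) := by
    intro j hj1 hj2
    have h0 : u (j+1) j * u (j+1) (j+1) = 0 :=
      hinc (j+1) (j+1) j (j+1) (by omega) (by omega) (by omega) (by omega) hj1
        (by omega) (by omega) hj2 (by omega) le_rfl
    rw [hq j hj1 (by omega), sub_mul, one_mul, sub_eq_zero] at h0
    exact h0.symm
  -- star trick
  have hstar : ∀ j j', 1 ≤ j → j ≤ n - 1 → 1 ≤ j' → j' ≤ n - 1 →
      u j j * u j' j' = u j' j' → u j' j' * u j j = u j' j' := by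
    intro j j' h1 h2 h3 h4 h
    have := congrArg star h
    rwa [star_mul, (hproj j j h1 (by omega) h1 h2).1,
      (hproj j' j' h3 (by omega) h3 h4).1] at this
  -- chain of nested projections
  have hchain : ∀ j, 1 ≤ j → ∀ j', j + 1 ≤ j' → j' ≤ n - 1 →
      u j j * u j' j' = u j' j' := by
    intro j hj1 j' hjj'
    induction j', hjj' using Nat.le_induction with
    | base => intro h; exact hadj j hj1 h
    | succ m hm ih =>
      intro hmn
      have ihm := ih (by omega)
      have hadjm := hadj m (by omega) hmn
      calc u j j * u (m+1) (m+1) = u j j * (u m m * u (m+1) (m+1)) := by rw [hadjm]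
        _ = (u j j * u m m) * u (m+1) (m+1) := (mul_assoc _ _ _).symm
        _ = u m m * u (m+1) (m+1) := by rw [ihm]
        _ = u (m+1) (m+1) := hadjm
  -- diagonal projections commute
  have hdiag : ∀ j j', 1 ≤ j → j ≤ n - 1 → 1 ≤ j' → j' ≤ n - 1 →
      Commute (u j j) (u j' j') := by
    intro j j' hj1 hj2 hj'1 hj'2
    rcases lt_trichotomy j j' with h | h | h
    · exact (hchain j hj1 j' h hj'2).trans
        (hstar j j' hj1 hj2 hj'1 hj'2 (hchain j hj1 j' h hj'2)).symm
    · rw [h]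
    · exact ((hchain j' hj'1 j h hj2).trans
        (hstar j' j hj'1 hj'2 hj1 hj2 (hchain j' hj'1 j h hj2)).symm).symm
  -- main argument
  intro i i' j j' hi1 hi2 hi'1 hi'2 hj1 hj2 hj'1 hj'2
  by_cases hij : i < j
  · rw [hlow j hj2 i hi1 hij, zero_mul, mul_zero]
  by_cases hij2 : j + 1 < i
  · rw [hhigh (n-1-j) j le_rfl hj1 hj2 i hi2 hij2, zero_mul, mul_zero]
  by_cases hij' : i' < j'
  · rw [hlow j' hj'2 i' hi'1 hij', zero_mul, mul_zero]
  by_cases hij'2 : j' + 1 < i'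
  · rw [hhigh (n-1-j') j' le_rfl hj'1 hj'2 i' hi'2 hij'2, zero_mul, mul_zero]
  have hc : Commute (u j j) (u j' j') := hdiag j j' hj1 hj2 hj'1 hj'2
  have hc1 : Commute (u i j) (u j' j') := by
    rcases (by omega : i = j ∨ i = j + 1) with h | h
    · rw [h]; exact hc
    · rw [h, hq j hj1 hj2]; exact (Commute.one_left _).sub_left hc
  rcases (by omega : i' = j' ∨ i' = j' + 1) with h | h
  · rw [h]; exact hc1
  · rw [h, hq j' hj'1 hj'2]; exact (Commute.one_right _).sub_right hc1
end
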